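/- arXiv:2203.09779 — 5 statements merged into one kernel-verified Lean document; each statement's English description precedes it below -/
import Mathlib

section
/- Let $Z$ be a measure space, $r \in (0,\infty)$, and let $(g_n)$ be a sequence in $L^r(Z)$ that is bounded in $L^r$ norm and converges almost everywhere to a function $g \in L^r(Z)$. Then $\lim_{n\to\infty} \left( \int_Z |g_n|^r - \int_Z |g_n - g|^r \right) = \int_Z |g|^r$. -/
/-!
For every `ε > 0` there is `C_ε` with `|‖a‖^r - ‖a - b‖^r - ‖b‖^r| ≤ ε ‖a - b‖^r + C_ε ‖b‖^r`:
when `‖b‖` is small compared with `‖a - b‖` this is continuity of `t ↦ t^r` at `1`, otherwise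
both `‖a‖` and `‖a - b‖` are `O(‖b‖)`. Take `a = gₙ`, `b = g` and let `Fₙ` be the quantity inside
the absolute value. The excess `(|Fₙ| - ε |gₙ - g|^r)⁺` tends to `0` a.e. and is dominated by
`C_ε |g|^r`, so its integral tends to `0`. Since `∫ |gₙ - g|^r` stays bounded by some `M`,
`limsup |∫ Fₙ| ≤ ε M` for every `ε`.
-/

open MeasureTheory Filter
open scoped ENNReal NNReal Topology

theorem Real.exists_abs_rpow_sub_rpow_le {r ε : ℝ} (hr : 0 < r) (hε : 0 < ε) :
    ∃ C : ℝ, ∀ x y c : ℝ, 0 ≤ x → 0 ≤ y → |y - x| ≤ c →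
      |y ^ r - x ^ r| ≤ ε * x ^ r + C * c ^ r := by
  obtain ⟨δ, hδ, hδε⟩ := Metric.continuousAt_iff.mp
    (Real.continuousAt_rpow_const 1 r (Or.inl one_ne_zero)) ε hε
  simp only [Real.dist_eq, Real.one_rpow] at hδε
  refine ⟨(1 + δ⁻¹) ^ r, fun x y c hx hy hxy => ?_⟩
  have hc : 0 ≤ c := (abs_nonneg _).trans hxy
  rcases lt_or_ge c (δ * x) with hsmall | hlarge
  · have hx0 : 0 < x := pos_of_mul_pos_right (hc.trans_lt hsmall) hδ.le
    have hclose : |y / x - 1| < δ := by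
      rw [div_sub_one hx0.ne', abs_div, abs_of_pos hx0, div_lt_iff₀ hx0]
      linarith
    have hy_r : y ^ r = (y / x) ^ r * x ^ r := by
      rw [← Real.mul_rpow (by positivity) hx, div_mul_cancel₀ _ hx0.ne']
    calc |y ^ r - x ^ r| = |(y / x) ^ r - 1| * x ^ r := by
          rw [hy_r, ← sub_one_mul, abs_mul, abs_of_nonneg (Real.rpow_nonneg hx r)]
      _ ≤ ε * x ^ r := mul_le_mul_of_nonneg_right (hδε hclose).le (by positivity)
      _ ≤ ε * x ^ r + (1 + δ⁻¹) ^ r * c ^ r := le_add_of_nonneg_right (by positivity)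
  · have hxc : x ≤ δ⁻¹ * c := by rw [inv_mul_eq_div, le_div_iff₀ hδ]; linarith
    have hδc : 0 ≤ δ⁻¹ * c := by positivity
    have hxK : x ≤ (1 + δ⁻¹) * c := by linarith
    have hyK : y ≤ (1 + δ⁻¹) * c := by linarith [(abs_le.mp hxy).2]
    calc |y ^ r - x ^ r| ≤ ((1 + δ⁻¹) * c) ^ r :=
          abs_sub_le_of_nonneg_of_le (by positivity) (Real.rpow_le_rpow hy hyK hr.le)
            (by positivity) (Real.rpow_le_rpow hx hxK hr.le)
      _ = (1 + δ⁻¹) ^ r * c ^ r := Real.mul_rpow (by positivity) hc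
      _ ≤ ε * x ^ r + (1 + δ⁻¹) ^ r * c ^ r := le_add_of_nonneg_left (by positivity)

theorem exists_abs_norm_rpow_sub_norm_sub_rpow_sub_le {E : Type*} [SeminormedAddCommGroup E]
    {r ε : ℝ} (hr : 0 < r) (hε : 0 < ε) :
    ∃ C : ℝ, ∀ a b : E, |‖a‖ ^ r - ‖a - b‖ ^ r - ‖b‖ ^ r| ≤ ε * ‖a - b‖ ^ r + C * ‖b‖ ^ r := by
  obtain ⟨C, hC⟩ := Real.exists_abs_rpow_sub_rpow_le hr hε
  refine ⟨C + 1, fun a b => ?_⟩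
  have hab := hC ‖a - b‖ ‖a‖ ‖b‖ (norm_nonneg _) (norm_nonneg _)
    (by simpa using abs_norm_sub_norm_le a (a - b))
  calc |‖a‖ ^ r - ‖a - b‖ ^ r - ‖b‖ ^ r| ≤ |‖a‖ ^ r - ‖a - b‖ ^ r| + |‖b‖ ^ r| := abs_sub _ _
    _ ≤ ε * ‖a - b‖ ^ r + (C + 1) * ‖b‖ ^ r := by
        rw [abs_of_nonneg (by positivity : 0 ≤ ‖b‖ ^ r)]; linarith

namespace MeasureTheory

variable {Z E : Type*} [MeasurableSpace Z] {μ : Measure Z} [NormedAddCommGroup E]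

theorem integral_norm_rpow_le_of_eLpNorm_le {p : ℝ≥0∞} (hp₀ : p ≠ 0) (hp : p ≠ ∞) {f : Z → E}
    (hf : AEStronglyMeasurable f μ) {C : ℝ≥0∞} (hC : C ≠ ∞) (h : eLpNorm f p μ ≤ C) :
    ∫ z, ‖f z‖ ^ p.toReal ∂μ ≤ C.toReal ^ p.toReal := by
  have hr : 0 < p.toReal := ENNReal.toReal_pos hp₀ hp
  have hI : 0 ≤ ∫ z, ‖f z‖ ^ p.toReal ∂μ := integral_nonneg fun z => by positivity
  calc ∫ z, ‖f z‖ ^ p.toReal ∂μ = lpNorm f p μ ^ p.toReal := by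
        rw [lpNorm_eq_integral_norm_rpow_toReal hp₀ hp hf, ← Real.rpow_mul hI,
          inv_mul_cancel₀ hr.ne', Real.rpow_one]
    _ ≤ C.toReal ^ p.toReal := by
        rw [← toReal_eLpNorm hf]
        gcongr

theorem exists_forall_integral_norm_sub_rpow_le {p : ℝ≥0∞} (hp₀ : p ≠ 0) (hp : p ≠ ∞)
    {g : ℕ → Z → E} {glim : Z → E} (hg : ∀ n, AEStronglyMeasurable (g n) μ)
    (hbdd : ∃ C : ℝ≥0∞, C ≠ ∞ ∧ ∀ n, eLpNorm (g n) p μ ≤ C) (hglim : MemLp glim p μ) :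
    ∃ M : ℝ, ∀ n, ∫ z, ‖g n z - glim z‖ ^ p.toReal ∂μ ≤ M := by
  obtain ⟨C, hC, hgC⟩ := hbdd
  have hD : ENNReal.LpAddConst p * (C + eLpNorm glim p μ) ≠ ∞ :=
    ENNReal.mul_ne_top (ENNReal.LpAddConst_lt_top p).ne
      (ENNReal.add_ne_top.mpr ⟨hC, hglim.eLpNorm_ne_top⟩)
  refine ⟨(ENNReal.LpAddConst p * (C + eLpNorm glim p μ)).toReal ^ p.toReal,
    fun n => integral_norm_rpow_le_of_eLpNorm_le hp₀ hp ((hg n).sub hglim.1) hD ?_⟩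
  calc eLpNorm (g n - glim) p μ
      ≤ ENNReal.LpAddConst p * (eLpNorm (g n) p μ + eLpNorm glim p μ) :=
        eLpNorm_sub_le' (hg n) hglim.1 p
    _ ≤ ENNReal.LpAddConst p * (C + eLpNorm glim p μ) := by gcongr; exact hgC n

theorem eventually_integral_norm_lt_integral_add {F : ℕ → Z → E} {h : ℕ → Z → ℝ} {G : Z → ℝ}
    (hF : ∀ n, AEStronglyMeasurable (F n) μ)
    (hF_lim : ∀ᵐ z ∂μ, Tendsto (fun n => F n z) atTop (𝓝 0))
    (hh : ∀ n, Integrable (h n) μ) (hh_nonneg : ∀ n, 0 ≤ᵐ[μ] h n) (hG : Integrable G μ)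
    (hdom : ∀ n, ∀ᵐ z ∂μ, ‖F n z‖ ≤ h n z + G z) {η : ℝ} (hη : 0 < η) :
    ∀ᶠ n in atTop, ∫ z, ‖F n z‖ ∂μ < ∫ z, h n z ∂μ + η := by
  set W : ℕ → Z → ℝ := fun n z => max (‖F n z‖ - h n z) 0
  have hW_meas : ∀ n, AEStronglyMeasurable (W n) μ := fun n =>
    ((hF n).norm.sub (hh n).1).sup aestronglyMeasurable_const
  have hW_le : ∀ n, ∀ᵐ z ∂μ, ‖W n z‖ ≤ ‖G z‖ := fun n => by
    filter_upwards [hdom n] with z hz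
    rw [Real.norm_of_nonneg (le_max_right _ _), Real.norm_eq_abs]
    exact max_le (by linarith [le_abs_self (G z)]) (abs_nonneg _)
  have hW_int : ∀ n, Integrable (W n) μ := fun n => hG.norm.mono' (hW_meas n) (hW_le n)
  have hW_lim : Tendsto (fun n => ∫ z, W n z ∂μ) atTop (𝓝 0) := by
    rw [← integral_zero Z ℝ]
    refine tendsto_integral_of_dominated_convergence _ hW_meas hG.norm hW_le ?_
    filter_upwards [hF_lim, ae_all_iff.mpr hh_nonneg] with z hz hz_nonneg
    refine squeeze_zero (fun n => le_max_right _ _) (fun n => ?_)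
      (tendsto_zero_iff_norm_tendsto_zero.mp hz)
    exact max_le (by linarith [show (0 : ℝ) ≤ h n z from hz_nonneg n]) (norm_nonneg _)
  filter_upwards [hW_lim.eventually_lt_const hη] with n hn
  calc ∫ z, ‖F n z‖ ∂μ ≤ ∫ z, W n z + h n z ∂μ :=
        integral_mono_of_nonneg (ae_of_all _ fun z => norm_nonneg _) ((hW_int n).add (hh n))
          (ae_of_all _ fun z => by linarith [le_max_left (‖F n z‖ - h n z) 0])
    _ = ∫ z, W n z ∂μ + ∫ z, h n z ∂μ := integral_add (hW_int n) (hh n)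
    _ < ∫ z, h n z ∂μ + η := by linarith

theorem tendsto_integral_zero_of_norm_le_mul_add [NormedSpace ℝ E] {F : ℕ → Z → E}
    {h : ℕ → Z → ℝ} {M : ℝ}
    (hF : ∀ n, AEStronglyMeasurable (F n) μ)
    (hF_lim : ∀ᵐ z ∂μ, Tendsto (fun n => F n z) atTop (𝓝 0))
    (hh : ∀ n, Integrable (h n) μ) (hh_nonneg : ∀ n, 0 ≤ᵐ[μ] h n)
    (hM : ∀ n, ∫ z, h n z ∂μ ≤ M)
    (hdom : ∀ ε > 0, ∃ G, Integrable G μ ∧ ∀ n, ∀ᵐ z ∂μ, ‖F n z‖ ≤ ε * h n z + G z) :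
    Tendsto (fun n => ∫ z, F n z ∂μ) atTop (𝓝 0) := by
  rw [NormedAddGroup.tendsto_nhds_zero]
  intro η hη
  obtain ⟨ε, hε, hMε⟩ := exists_pos_mul_lt (half_pos hη) M
  obtain ⟨G, hG, hdomε⟩ := hdom ε hε
  have hεh_nonneg : ∀ n, 0 ≤ᵐ[μ] fun z => ε * h n z := fun n => by
    filter_upwards [hh_nonneg n] with z hz using mul_nonneg hε.le hz
  filter_upwards [eventually_integral_norm_lt_integral_add hF hF_lim (fun n => (hh n).const_mul ε)
    hεh_nonneg hG hdomε (half_pos hη)] with n hn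
  calc ‖∫ z, F n z ∂μ‖ ≤ ∫ z, ‖F n z‖ ∂μ := norm_integral_le_integral_norm _
    _ < ε * ∫ z, h n z ∂μ + η / 2 := by rwa [← integral_const_mul]
    _ ≤ M * ε + η / 2 := by nlinarith [hM n]
    _ < η := by linarith

theorem tendsto_integral_norm_rpow_sub_integral_norm_sub_rpow {p : ℝ≥0∞} (hp₀ : p ≠ 0)
    (hp : p ≠ ∞) {g : ℕ → Z → E} {glim : Z → E} (hg : ∀ n, MemLp (g n) p μ)
    (hbdd : ∃ C : ℝ≥0∞, C ≠ ∞ ∧ ∀ n, eLpNorm (g n) p μ ≤ C)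
    (hae : ∀ᵐ z ∂μ, Tendsto (fun n => g n z) atTop (𝓝 (glim z))) (hglim : MemLp glim p μ) :
    Tendsto (fun n => (∫ z, ‖g n z‖ ^ p.toReal ∂μ) - ∫ z, ‖g n z - glim z‖ ^ p.toReal ∂μ)
      atTop (𝓝 (∫ z, ‖glim z‖ ^ p.toReal ∂μ)) := by
  set r := p.toReal
  have hr : 0 < r := ENNReal.toReal_pos hp₀ hp
  have hint : ∀ {f : Z → E}, MemLp f p μ → Integrable (fun z => ‖f z‖ ^ r) μ :=
    fun hf => hf.integrable_norm_rpow hp₀ hp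
  have hg_int := fun n => hint (hg n)
  have hsub_int : ∀ n, Integrable (fun z => ‖g n z - glim z‖ ^ r) μ :=
    fun n => hint ((hg n).sub hglim)
  have hglim_int := hint hglim
  obtain ⟨M, hM⟩ := exists_forall_integral_norm_sub_rpow_le hp₀ hp (fun n => (hg n).1) hbdd hglim
  have hcont : Continuous fun x : E => ‖x‖ ^ r := by fun_prop (disch := exact hr.le)
  have hF_lim : ∀ᵐ z ∂μ, Tendsto (fun n => ‖g n z‖ ^ r - ‖g n z - glim z‖ ^ r - ‖glim z‖ ^ r)
      atTop (𝓝 0) := by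
    filter_upwards [hae] with z hz
    have hsub : Tendsto (fun n => ‖g n z - glim z‖ ^ r) atTop (𝓝 0) := by
      simpa [Real.zero_rpow hr.ne', Function.comp_def] using
        (hcont.tendsto 0).comp (by simpa using hz.sub_const (glim z))
    simpa using (((hcont.tendsto (glim z)).comp hz).sub hsub).sub_const (‖glim z‖ ^ r)
  have hF : Tendsto (fun n => ∫ z, ‖g n z‖ ^ r - ‖g n z - glim z‖ ^ r - ‖glim z‖ ^ r ∂μ)
      atTop (𝓝 0) := tendsto_integral_zero_of_norm_le_mul_add
    (fun n => (((hg_int n).sub (hsub_int n)).sub hglim_int).1) hF_lim hsub_int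
    (fun n => ae_of_all _ fun z => by positivity) hM fun ε hε => by
      obtain ⟨C, hC⟩ := exists_abs_norm_rpow_sub_norm_sub_rpow_sub_le (E := E) hr hε
      exact ⟨_, hglim_int.const_mul C, fun n => ae_of_all _ fun z => hC (g n z) (glim z)⟩
  rw [← tendsto_sub_nhds_zero_iff]
  refine hF.congr fun n => ?_
  rw [integral_sub _ hglim_int, integral_sub (hg_int n) (hsub_int n)]
  exact (hg_int n).sub (hsub_int n)

end MeasureTheory

/-- **Brézis–Lieb lemma**: if `(g n)` is bounded in `L^r` and converges a.e. to `g ∈ L^r`,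
then `∫ |g n|^r - ∫ |g n - g|^r → ∫ |g|^r`. -/
theorem brezis_lieb {Z : Type*} [MeasurableSpace Z] (μ : Measure Z) (r : ℝ) (hr : 0 < r)
    (g : ℕ → Z → ℝ) (glim : Z → ℝ)
    (hmem : ∀ n, MemLp (g n) (ENNReal.ofReal r) μ)
    (hbdd : ∃ C : ℝ≥0∞, C ≠ ⊤ ∧ ∀ n, eLpNorm (g n) (ENNReal.ofReal r) μ ≤ C)
    (hae : ∀ᵐ z ∂μ, Tendsto (fun n => g n z) atTop (nhds (glim z)))
    (hglim : MemLp glim (ENNReal.ofReal r) μ) :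
    Tendsto
      (fun n => (∫ z, |g n z| ^ r ∂μ) - ∫ z, |g n z - glim z| ^ r ∂μ)
      atTop (nhds (∫ z, |glim z| ^ r ∂μ)) := by
  simpa only [ENNReal.toReal_ofReal hr.le, Real.norm_eq_abs] using
    tendsto_integral_norm_rpow_sub_integral_norm_sub_rpow (ENNReal.ofReal_ne_zero_iff.mpr hr)
      ENNReal.ofReal_ne_top hmem hbdd hae hglim
end

section
/- Let $X$ be a measure space and $0 < p < q < r < \infty$. Let $(f_n)$ be a sequence of measurable functions that is bounded in both $L^p(X)$ and $L^r(X)$, and suppose there exists $\alpha > 0$ such that $\|f_n\|_{L^q} \ge \alpha$ for all $n$. Then there exist $\delta, \epsilon > 0$ such that for all $n$, the measure of the set $\{x \in X : |f_n(x)| > \epsilon\}$ is at least $\delta$. -/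
/-!
Split `|f|` at two levels `ε` and `M`: where `|f| ≤ ε` we have `|f|^q ≤ ε^(q-p) |f|^p`, where
`|f| > M` we have `|f|^q ≤ M^(q-r) |f|^r`, and in between `|f|^q ≤ M^q`. Integrating,
`α^q ≤ ‖f‖_q^q ≤ ε^(q-p) C^p + M^q μ{|f| > ε} + M^(q-r) C^r`. Since `q - p > 0` and `q - r < 0`,
taking `ε` small and `M` large makes the outer terms at most `α^q / 4` each, leaving
`μ{|f| > ε} ≥ α^q / (2 M^q)`.
-/

open MeasureTheory Filter
open scoped ENNReal Topology

namespace ENNReal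

theorem rpow_le_mul_add_indicator_add {p q r : ℝ} (hq : 0 < q) (hpq : p < q) (hqr : q < r)
    (ε M : ℝ≥0∞) {a : ℝ≥0∞} (ha : a ≠ ⊤) :
    a ^ q ≤ ε ^ (q - p) * a ^ p + (Set.Ioi ε).indicator (fun _ ↦ M ^ q) a +
      M ^ (q - r) * a ^ r := by
  rcases eq_or_ne a 0 with rfl | ha₀
  · simp [zero_rpow_of_pos hq]
  have split (s : ℝ) : a ^ q = a ^ (q - s) * a ^ s := by rw [← rpow_add _ _ ha₀ ha, sub_add_cancel]
  rcases le_or_gt a ε with haε | hεa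
  · calc a ^ q = a ^ (q - p) * a ^ p := split p
      _ ≤ ε ^ (q - p) * a ^ p := by gcongr
      _ ≤ _ := le_add_right (le_add_right le_rfl)
  rcases le_or_gt a M with haM | hMa
  · calc a ^ q ≤ M ^ q := rpow_le_rpow haM hq.le
      _ = (Set.Ioi ε).indicator (fun _ ↦ M ^ q) a :=
        (Set.indicator_of_mem (s := Set.Ioi ε) hεa fun _ ↦ M ^ q).symm
      _ ≤ _ := le_add_right (le_add_left le_rfl)
  · have : a ^ (q - r) ≤ M ^ (q - r) := by
      rw [← neg_sub r q, rpow_neg, rpow_neg]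
      exact ENNReal.inv_le_inv.2 (rpow_le_rpow hMa.le (by linarith))
    calc a ^ q = a ^ (q - r) * a ^ r := split r
      _ ≤ M ^ (q - r) * a ^ r := by gcongr
      _ ≤ _ := le_add_left le_rfl

theorem exists_pos_ofReal_rpow_mul_le {s : ℝ} (hs : s ≠ 0) {K c : ℝ≥0∞} (hK : K ≠ ⊤)
    (hc : c ≠ 0) : ∃ t : ℝ, 0 < t ∧ ENNReal.ofReal t ^ s * K ≤ c := by
  obtain ⟨l, _, hl_pos, hl⟩ : ∃ l : Filter ℝ, l.NeBot ∧ (∀ᶠ t in l, 0 < t) ∧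
      Tendsto (fun t ↦ ENNReal.ofReal t ^ s) l (𝓝 0) := by
    rcases hs.lt_or_gt with hs | hs
    · refine ⟨atTop, inferInstance, eventually_gt_atTop 0, ?_⟩
      have := ((continuous_rpow_const (y := s)).tendsto ⊤).comp tendsto_ofReal_atTop
      rwa [top_rpow_of_neg hs] at this
    · refine ⟨𝓝[>] 0, inferInstance, self_mem_nhdsWithin, ?_⟩
      have : Tendsto (fun t ↦ ENNReal.ofReal t ^ s) (𝓝 0) (𝓝 (0 ^ s)) :=
        (continuous_rpow_const.comp continuous_ofReal).tendsto' 0 _ (by simp)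
      rw [zero_rpow_of_pos hs] at this
      exact this.mono_left nhdsWithin_le_nhds
  have hlK := Tendsto.mul_const hl (Or.inr hK)
  rw [zero_mul] at hlK
  exact (hl_pos.and (hlK.eventually (eventually_le_nhds hc.bot_lt))).exists

end ENNReal

namespace MeasureTheory

variable {X : Type*} [MeasurableSpace X] {μ : Measure X} {p q r : ℝ}

theorem lintegral_rpow_le_add_measure_superlevel_add (hq : 0 < q) (hpq : p < q) (hqr : q < r)
    {g : X → ℝ≥0∞} (hg : AEMeasurable g μ) (hg_top : ∀ᵐ x ∂μ, g x ≠ ⊤) (ε M : ℝ≥0∞) :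
    ∫⁻ x, g x ^ q ∂μ ≤ ε ^ (q - p) * ∫⁻ x, g x ^ p ∂μ + M ^ q * μ {x | ε < g x} +
      M ^ (q - r) * ∫⁻ x, g x ^ r ∂μ := by
  have hind : ∫⁻ x, (Set.Ioi ε).indicator (fun _ ↦ M ^ q) (g x) ∂μ ≤ M ^ q * μ {x | ε < g x} :=
    calc _ = ∫⁻ x, (g ⁻¹' Set.Ioi ε).indicator (fun _ ↦ M ^ q) x ∂μ :=
          lintegral_congr fun x ↦ (Set.indicator_comp_right g).symm
      _ ≤ _ := lintegral_indicator_const_le _ _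
  calc ∫⁻ x, g x ^ q ∂μ
      ≤ ∫⁻ x, ε ^ (q - p) * g x ^ p + (Set.Ioi ε).indicator (fun _ ↦ M ^ q) (g x) +
          M ^ (q - r) * g x ^ r ∂μ :=
        lintegral_mono_ae <| hg_top.mono fun x hx ↦
          ENNReal.rpow_le_mul_add_indicator_add hq hpq hqr ε M hx
    _ = ε ^ (q - p) * ∫⁻ x, g x ^ p ∂μ + ∫⁻ x, (Set.Ioi ε).indicator (fun _ ↦ M ^ q) (g x) ∂μ +
          M ^ (q - r) * ∫⁻ x, g x ^ r ∂μ := by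
      rw [lintegral_add_right' _ ((hg.pow_const r).const_mul _),
        lintegral_add_left' ((hg.pow_const p).const_mul _),
        lintegral_const_mul'' _ (hg.pow_const p), lintegral_const_mul'' _ (hg.pow_const r)]
    _ ≤ _ := by gcongr

theorem eLpNorm_ofReal_rpow_eq_lintegral {E : Type*} [ENorm E] (hp : 0 < p) (f : X → E) :
    eLpNorm f (ENNReal.ofReal p) μ ^ p = ∫⁻ x, ‖f x‖ₑ ^ p ∂μ := by
  have := eLpNorm_nnreal_pow_eq_lintegral (f := f) (μ := μ) (Real.toNNReal_pos.2 hp).ne'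
  rwa [Real.coe_toNNReal _ hp.le] at this

theorem eLpNorm_rpow_le_add_measure_superlevel_add {E : Type*} [SeminormedAddGroup E]
    (hp : 0 < p) (hpq : p < q) (hqr : q < r) {f : X → E} (hf : AEStronglyMeasurable f μ)
    (ε M : ℝ≥0∞) :
    eLpNorm f (ENNReal.ofReal q) μ ^ q ≤ ε ^ (q - p) * eLpNorm f (ENNReal.ofReal p) μ ^ p +
      M ^ q * μ {x | ε < ‖f x‖ₑ} + M ^ (q - r) * eLpNorm f (ENNReal.ofReal r) μ ^ r := by
  simp only [eLpNorm_ofReal_rpow_eq_lintegral, hp, hp.trans hpq, hp.trans (hpq.trans hqr)]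
  exact lintegral_rpow_le_add_measure_superlevel_add (hp.trans hpq) hpq hqr hf.enorm
    (ae_of_all _ fun _ ↦ enorm_ne_top) ε M

theorem half_le_mul_measure_superlevel_of_eLpNorm_le {E : Type*} [SeminormedAddGroup E]
    (hp : 0 < p) (hpq : p < q) (hqr : q < r) {f : X → E} (hf : AEStronglyMeasurable f μ)
    {c C ε M : ℝ≥0∞} (hc : c ≠ ⊤) (hc_le : c ≤ eLpNorm f (ENNReal.ofReal q) μ ^ q)
    (hfp : eLpNorm f (ENNReal.ofReal p) μ ≤ C) (hfr : eLpNorm f (ENNReal.ofReal r) μ ≤ C)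
    (hεC : ε ^ (q - p) * C ^ p ≤ c / 2 / 2) (hMC : M ^ (q - r) * C ^ r ≤ c / 2 / 2) :
    c / 2 ≤ M ^ q * μ {x | ε < ‖f x‖ₑ} := by
  rw [← ENNReal.sub_half hc, tsub_le_iff_left]
  calc c ≤ eLpNorm f (ENNReal.ofReal q) μ ^ q := hc_le
    _ ≤ ε ^ (q - p) * eLpNorm f (ENNReal.ofReal p) μ ^ p + M ^ q * μ {x | ε < ‖f x‖ₑ} +
        M ^ (q - r) * eLpNorm f (ENNReal.ofReal r) μ ^ r :=
      eLpNorm_rpow_le_add_measure_superlevel_add hp hpq hqr hf ε M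
    _ ≤ c / 2 / 2 + M ^ q * μ {x | ε < ‖f x‖ₑ} + c / 2 / 2 := by
      gcongr
      · exact (mul_le_mul_right (ENNReal.rpow_le_rpow hfp hp.le) _).trans hεC
      · exact (mul_le_mul_right (ENNReal.rpow_le_rpow hfr (by linarith)) _).trans hMC
    _ = c / 2 + M ^ q * μ {x | ε < ‖f x‖ₑ} := by rw [add_right_comm, ENNReal.add_halves]

end MeasureTheory

/-- **The `pqr` lemma** (Fröhlich–Lieb–Loss): a sequence bounded in `L^p` and `L^r` whose
`L^q` norms are bounded below (for `p < q < r`) has superlevel sets of measure uniformly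
bounded below. -/
theorem pqr_lemma {X : Type*} [MeasurableSpace X] (μ : Measure X)
    (p q r : ℝ) (hp : 0 < p) (hpq : p < q) (hqr : q < r)
    (f : ℕ → X → ℝ) (hmeas : ∀ n, AEStronglyMeasurable (f n) μ)
    (hbdd : ∃ C : ℝ≥0∞, C ≠ ⊤ ∧ ∀ n,
      eLpNorm (f n) (ENNReal.ofReal p) μ ≤ C ∧ eLpNorm (f n) (ENNReal.ofReal r) μ ≤ C)
    (α : ℝ) (hα : 0 < α)
    (hlow : ∀ n, ENNReal.ofReal α ≤ eLpNorm (f n) (ENNReal.ofReal q) μ) :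
    ∃ δ ε : ℝ, 0 < δ ∧ 0 < ε ∧ ∀ n,
      ENNReal.ofReal δ ≤ μ {x | ε < |f n x|} := by
  obtain ⟨C, hC, hfC⟩ := hbdd
  have hq : 0 < q := hp.trans hpq
  have hr : 0 < r := hq.trans hqr
  have hc : ENNReal.ofReal α ^ q / 2 / 2 ≠ 0 := by simp [ENNReal.div_eq_zero_iff, hα, hq]
  obtain ⟨ε, hε, hεC⟩ :=
    ENNReal.exists_pos_ofReal_rpow_mul_le (sub_pos.2 hpq).ne' (K := C ^ p) (by finiteness) hc
  obtain ⟨M, hM, hMC⟩ :=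
    ENNReal.exists_pos_ofReal_rpow_mul_le (sub_neg.2 hqr).ne (K := C ^ r) (by finiteness) hc
  have hMq : ENNReal.ofReal M ^ q ≠ 0 := by positivity
  refine ⟨(ENNReal.ofReal α ^ q / 2 / ENNReal.ofReal M ^ q).toReal, ε, ?_, hε, fun n ↦ ?_⟩
  · apply ENNReal.toReal_pos <;> simp [ENNReal.div_eq_zero_iff, ENNReal.div_eq_top, hα, hq, hM]
  have hS : {x | ε < |f n x|} = {x | ENNReal.ofReal ε < ‖f n x‖ₑ} := by
    ext x
    simp [Real.enorm_eq_ofReal_abs, ENNReal.ofReal_lt_ofReal_iff_of_nonneg hε.le]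
  rw [ENNReal.ofReal_toReal (by finiteness), hS, ENNReal.div_le_iff hMq (by finiteness), mul_comm]
  exact half_le_mul_measure_superlevel_of_eLpNorm_le hp hpq hqr (hmeas n) (by finiteness)
    (ENNReal.rpow_le_rpow (hlow n) hq.le) (hfC n).1 (hfC n).2 hεC hMC
end

section
/- Let $q > 2$, let $\mathcal{H}$ be a separable Hilbert space, $Y$ a measure space, and $A : \mathcal{H} \to L^q(Y)$ a nonzero bounded linear operator. Set $\mathcal{S} = \sup\{ \|Af\|_{L^q}^q : \|f\|_{\mathcal{H}} = 1 \}$. Suppose $(f_n) \subset \mathcal{H}$ satisfies: $\|f_n\|_{\mathcal{H}} = 1$; $\|Af_n\|_{L^q}^q \to \mathcal{S}$; $f_n \rightharpoonup f$ weakly in $\mathcal{H}$ with $f \ne 0$; and $Af_n \to Af$ almost everywhere on $Y$. Then $f_n \to f$ strongly in $\mathcal{H}$ and $\|Af\|_{L^q}^q = \mathcal{S}$. -/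
/-! Put `l = ‖flim‖`. Weak convergence of unit vectors gives `‖f n - flim‖ → √(1 - l ^ 2)`, and the
Brezis–Lieb lemma splits the `L^q` mass: `‖A (f n)‖ ^ q - ‖A (f n - flim)‖ ^ q → ‖A flim‖ ^ q`.
The supremum is `S = ‖A‖ ^ q`, so bounding both pieces by `‖A g‖ ^ q ≤ S ‖g‖ ^ q` yields
`S ≤ S (l ^ q + √(1 - l ^ 2) ^ q)`. For `q > 2` and `0 < l < 1` the bracket is strictly below
`l ^ 2 + (1 - l ^ 2) = 1`, and `S > 0` since `A ≠ 0`; hence `l = 1`, i.e. `f n → flim` in norm. -/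

open MeasureTheory Filter Topology
open scoped ENNReal NNReal RealInnerProductSpace

theorem abs_rpow_sub_rpow_le_of_mem_Icc {q R x y : ℝ} (hq : 1 ≤ q) (hx : x ∈ Set.Icc 0 R)
    (hy : y ∈ Set.Icc 0 R) : |x ^ q - y ^ q| ≤ q * R ^ (q - 1) * |x - y| := by
  refine (convex_Icc 0 R).norm_image_sub_le_of_norm_hasDerivWithin_le
    (fun t _ => (Real.hasDerivAt_rpow_const (Or.inr hq)).hasDerivWithinAt) (fun t ht => ?_) hy hx
  rw [Real.norm_of_nonneg (by have := ht.1; positivity)]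
  exact mul_le_mul_of_nonneg_left (Real.rpow_le_rpow ht.1 ht.2 (by linarith)) (by linarith)

theorem abs_abs_add_rpow_sub_rpow_le {q : ℝ} (hq : 1 ≤ q) (a b : ℝ) :
    |(|a + b| ^ q - |a| ^ q)| ≤ q * (|a| + |b|) ^ (q - 1) * |b| := by
  calc |(|a + b| ^ q - |a| ^ q)| ≤ q * (|a| + |b|) ^ (q - 1) * |(|a + b| - |a|)| :=
        abs_rpow_sub_rpow_le_of_mem_Icc hq ⟨abs_nonneg _, abs_add_le a b⟩
          ⟨abs_nonneg _, le_add_of_nonneg_right (abs_nonneg b)⟩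
    _ ≤ q * (|a| + |b|) ^ (q - 1) * |b| :=
        mul_le_mul_of_nonneg_left (by simpa using abs_abs_sub_abs_le_abs_sub (a + b) a)
          (by positivity)

theorem rpow_add_le_of_le_mul {x y c r : ℝ} (hx : 0 ≤ x) (hy : 0 ≤ y) (hc : 0 ≤ c) (hr : 0 ≤ r)
    (h : y ≤ c * x) : (x + y) ^ r ≤ (1 + c) ^ r * x ^ r := by
  rw [← Real.mul_rpow (by positivity) hx]
  exact Real.rpow_le_rpow (by positivity) (by linarith) hr

theorem rpow_sub_one_mul_self {x q : ℝ} (hx : 0 ≤ x) (hq : 1 ≤ q) : x ^ (q - 1) * x = x ^ q := by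
  rw [← Real.rpow_add_one' hx (by linarith), sub_add_cancel]

theorem exists_mul_add_rpow_mul_le {q ε : ℝ} (hq : 1 ≤ q) (hε : 0 < ε) :
    ∃ C, ∀ {x y : ℝ}, 0 ≤ x → 0 ≤ y → q * (x + y) ^ (q - 1) * y ≤ ε * x ^ q + C * y ^ q := by
  have hcont : Tendsto (fun δ : ℝ => q * δ * (1 + δ) ^ (q - 1)) (𝓝[>] 0) (𝓝 0) := by
    have : ContinuousAt (fun δ : ℝ => q * δ * (1 + δ) ^ (q - 1)) 0 :=
      (continuous_const.mul continuous_id).continuousAt.mul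
        ((continuous_const.add continuous_id).continuousAt.rpow_const (Or.inl (by norm_num)))
    simpa using this.tendsto.mono_left nhdsWithin_le_nhds
  obtain ⟨δ, hδε, hδ_mem⟩ :=
    ((hcont.eventually (ge_mem_nhds hε)).and self_mem_nhdsWithin).exists
  have hδ : 0 < δ := hδ_mem
  refine ⟨q * (1 + δ⁻¹) ^ (q - 1), fun {x y} hx hy => ?_⟩
  have hq' : 0 ≤ q - 1 := by linarith
  rcases le_total y (δ * x) with hyx | hxy
  · calc q * (x + y) ^ (q - 1) * y ≤ q * ((1 + δ) ^ (q - 1) * x ^ (q - 1)) * (δ * x) := by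
          gcongr
          exact rpow_add_le_of_le_mul hx hy hδ.le hq' hyx
      _ = q * δ * (1 + δ) ^ (q - 1) * (x ^ (q - 1) * x) := by ring
      _ ≤ ε * x ^ q := by rw [rpow_sub_one_mul_self hx hq]; gcongr
      _ ≤ ε * x ^ q + q * (1 + δ⁻¹) ^ (q - 1) * y ^ q := le_add_of_nonneg_right (by positivity)
  · have hxy' : x ≤ δ⁻¹ * y := by rw [inv_mul_eq_div, le_div_iff₀' hδ]; exact hxy
    calc q * (x + y) ^ (q - 1) * y ≤ q * ((1 + δ⁻¹) ^ (q - 1) * y ^ (q - 1)) * y := by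
          rw [add_comm]
          gcongr
          exact rpow_add_le_of_le_mul hy hx (by positivity) hq' hxy'
      _ = q * (1 + δ⁻¹) ^ (q - 1) * (y ^ (q - 1) * y) := by ring
      _ = q * (1 + δ⁻¹) ^ (q - 1) * y ^ q := by rw [rpow_sub_one_mul_self hy hq]
      _ ≤ ε * x ^ q + q * (1 + δ⁻¹) ^ (q - 1) * y ^ q := le_add_of_nonneg_left (by positivity)

theorem exists_abs_abs_add_rpow_sub_le {q ε : ℝ} (hq : 1 ≤ q) (hε : 0 < ε) :
    ∃ C, ∀ a b : ℝ, |(|a + b| ^ q - |a| ^ q - |b| ^ q)| ≤ ε * |a| ^ q + C * |b| ^ q := by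
  obtain ⟨C, hC⟩ := exists_mul_add_rpow_mul_le hq hε
  refine ⟨C + 1, fun a b => ?_⟩
  have h₁ := abs_abs_add_rpow_sub_rpow_le hq a b
  have h₂ := hC (abs_nonneg a) (abs_nonneg b)
  calc |(|a + b| ^ q - |a| ^ q - |b| ^ q)| ≤ |(|a + b| ^ q - |a| ^ q)| + |b| ^ q := by
        simpa [abs_of_nonneg (by positivity : (0 : ℝ) ≤ |b| ^ q)] using
          abs_sub (|a + b| ^ q - |a| ^ q) (|b| ^ q)
    _ ≤ ε * |a| ^ q + (C + 1) * |b| ^ q := by linarith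

theorem rpow_add_sqrt_one_sub_sq_rpow_lt_one {l q : ℝ} (hq : 2 < q) (h₀ : 0 < l) (h₁ : l < 1) :
    l ^ q + √(1 - l ^ 2) ^ q < 1 := by
  have hl : l ^ q < l ^ (2 : ℝ) := Real.rpow_lt_rpow_of_exponent_gt h₀ h₁ hq
  have hm : √(1 - l ^ 2) ^ q ≤ √(1 - l ^ 2) ^ (2 : ℝ) :=
    Real.rpow_le_rpow_of_exponent_ge' (Real.sqrt_nonneg _) (Real.sqrt_le_one.2 (by nlinarith))
      (by norm_num) hq.le
  rw [Real.rpow_two] at hl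
  rw [Real.rpow_two, Real.sq_sqrt (by nlinarith)] at hm
  linarith

section BrezisLieb

variable {Y : Type*} [MeasurableSpace Y] {ν : Measure Y}

theorem tendsto_integral_abs_of_le_mul_add {φ ψ : ℕ → Y → ℝ} {M : ℝ}
    (hφ : ∀ n, Integrable (φ n) ν) (hψ : ∀ n, Integrable (ψ n) ν) (hψ₀ : ∀ n y, 0 ≤ ψ n y)
    (hψM : ∀ n, ∫ y, ψ n y ∂ν ≤ M) (hlim : ∀ᵐ y ∂ν, Tendsto (φ · y) atTop (𝓝 0))
    (hdom : ∀ ε > 0, ∃ G : Y → ℝ, Integrable G ν ∧ ∀ n y, |φ n y| ≤ ε * ψ n y + G y) :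
    Tendsto (fun n => ∫ y, |φ n y| ∂ν) atTop (𝓝 0) := by
  refine tendsto_order.2 ⟨fun a ha => .of_forall fun n =>
    ha.trans_le (integral_nonneg fun y => abs_nonneg _), fun a ha => ?_⟩
  have hM : 0 ≤ M := (integral_nonneg (hψ₀ 0)).trans (hψM 0)
  set ε := a / (2 * (M + 1)) with hε_def
  have hε : 0 < ε := by positivity
  have hεM : ε * M ≤ a / 2 := by
    calc ε * M ≤ ε * (M + 1) := by gcongr; linarith
      _ = a / 2 := by rw [hε_def]; field_simp
  obtain ⟨G, hG, hφG⟩ := hdom ε hε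
  -- Dominated convergence only handles the excess `W n` over `ε ψ n`; the rest is at most `ε M`.
  set W : ℕ → Y → ℝ := fun n y => max (|φ n y| - ε * ψ n y) 0
  have hW : ∀ n, Integrable (W n) ν := fun n => ((hφ n).abs.sub ((hψ n).const_mul ε)).pos_part
  have hW_lim : Tendsto (fun n => ∫ y, W n y ∂ν) atTop (𝓝 0) := by
    simpa using tendsto_integral_of_dominated_convergence (fun y => |G y|)
      (fun n => (hW n).aestronglyMeasurable) hG.abs
      (fun n => .of_forall fun y => by
        rw [Real.norm_of_nonneg (le_max_right _ _)]
        exact max_le (by linarith [hφG n y, le_abs_self (G y)]) (abs_nonneg _))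
      (hlim.mono fun y hy => squeeze_zero (fun n => le_max_right _ _)
        (fun n => max_le (by linarith [hψ₀ n y, mul_nonneg hε.le (hψ₀ n y)]) (abs_nonneg _))
        (by simpa using hy.abs))
  filter_upwards [hW_lim.eventually (gt_mem_nhds (half_pos ha))] with n hn
  calc ∫ y, |φ n y| ∂ν ≤ ∫ y, (W n y + ε * ψ n y) ∂ν :=
        integral_mono (hφ n).abs ((hW n).add ((hψ n).const_mul ε))
          fun y => by linarith [le_max_left (|φ n y| - ε * ψ n y) 0]
    _ = ∫ y, W n y ∂ν + ε * ∫ y, ψ n y ∂ν := by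
        rw [integral_add (hW n) ((hψ n).const_mul ε), integral_const_mul]
    _ < a := by nlinarith [hψM n]

theorem tendsto_integral_rpow_sub_integral_rpow_sub {q M : ℝ} (hq : 1 ≤ q)
    {u : ℕ → Y → ℝ} {v : Y → ℝ}
    (hu : ∀ n, Integrable (fun y => |u n y| ^ q) ν)
    (huv : ∀ n, Integrable (fun y => |u n y - v y| ^ q) ν)
    (hv : Integrable (fun y => |v y| ^ q) ν)
    (hM : ∀ n, ∫ y, |u n y - v y| ^ q ∂ν ≤ M)
    (hae : ∀ᵐ y ∂ν, Tendsto (u · y) atTop (𝓝 (v y))) :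
    Tendsto (fun n => ∫ y, |u n y| ^ q ∂ν - ∫ y, |u n y - v y| ^ q ∂ν) atTop
      (𝓝 (∫ y, |v y| ^ q ∂ν)) := by
  set φ : ℕ → Y → ℝ := fun n y => |u n y| ^ q - |u n y - v y| ^ q - |v y| ^ q with hφ_def
  have hφ : ∀ n, Integrable (φ n) ν := fun n => ((hu n).sub (huv n)).sub hv
  have hφ_lim : Tendsto (fun n => ∫ y, |φ n y| ∂ν) atTop (𝓝 0) := by
    refine tendsto_integral_abs_of_le_mul_add hφ huv (fun n y => by positivity) hM ?_ ?_
    · filter_upwards [hae] with y hy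
      have hcont : Continuous fun x : ℝ => |x| ^ q :=
        continuous_abs.rpow_const fun _ => Or.inr (by linarith)
      have := (((hcont.tendsto _).comp hy).sub
        ((hcont.tendsto 0).comp (tendsto_sub_nhds_zero_iff.2 hy))).sub_const (|v y| ^ q)
      simpa [hφ_def, Real.zero_rpow (by linarith : q ≠ 0)] using this
    · intro ε hε
      obtain ⟨C, hC⟩ := exists_abs_abs_add_rpow_sub_le hq hε
      exact ⟨fun y => C * |v y| ^ q, hv.const_mul C,
        fun n y => by simpa [hφ_def] using hC (u n y - v y) (v y)⟩
  have hφ_int : ∀ n, ∫ y, |u n y| ^ q ∂ν - ∫ y, |u n y - v y| ^ q ∂ν - ∫ y, |v y| ^ q ∂ν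
      = ∫ y, φ n y ∂ν := fun n => by
    simp only [hφ_def]
    rw [integral_sub, integral_sub]
    exacts [hu n, huv n, (hu n).sub (huv n), hv]
  rw [tendsto_iff_norm_sub_tendsto_zero]
  refine squeeze_zero (fun n => norm_nonneg _) (fun n => ?_) hφ_lim
  rw [hφ_int n]
  exact norm_integral_le_integral_norm _

end BrezisLieb

namespace MeasureTheory.Lp

variable {Y : Type*} [MeasurableSpace Y] {ν : Measure Y} {q : ℝ}

theorem norm_rpow_eq_integral (hq : 0 < q) (u : Lp ℝ (ENNReal.ofReal q) ν) :
    ‖u‖ ^ q = ∫ y, |u y| ^ q ∂ν := by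
  have hp₀ : ENNReal.ofReal q ≠ 0 := by simpa using hq
  have hint : 0 ≤ ∫ y, ‖u y‖ ^ q ∂ν := integral_nonneg fun y => by positivity
  rw [Lp.norm_def, (Lp.memLp u).eLpNorm_eq_integral_rpow_norm hp₀ ENNReal.ofReal_ne_top,
    ENNReal.toReal_ofReal hq.le, ENNReal.toReal_ofReal (by positivity),
    Real.rpow_inv_rpow hint hq.ne']
  simp only [Real.norm_eq_abs]

theorem integrable_abs_rpow (hq : 0 < q) (u : Lp ℝ (ENNReal.ofReal q) ν) :
    Integrable (fun y => |u y| ^ q) ν := by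
  simpa [ENNReal.toReal_ofReal hq.le, Real.norm_eq_abs] using
    (Lp.memLp u).integrable_norm_rpow (by simpa using hq) ENNReal.ofReal_ne_top

theorem tendsto_norm_rpow_sub_norm_sub_rpow (hq : 1 ≤ q) {u : ℕ → Lp ℝ (ENNReal.ofReal q) ν}
    {v : Lp ℝ (ENNReal.ofReal q) ν} {M : ℝ} (hM : ∀ n, ‖u n - v‖ ≤ M)
    (hae : ∀ᵐ y ∂ν, Tendsto (u · y) atTop (𝓝 (v y))) :
    Tendsto (fun n => ‖u n‖ ^ q - ‖u n - v‖ ^ q) atTop (𝓝 (‖v‖ ^ q)) := by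
  have hq₀ : 0 < q := by linarith
  have : Fact (1 ≤ ENNReal.ofReal q) := ⟨ENNReal.one_le_ofReal.2 hq⟩
  have hsub : ∀ n, (fun y => |(u n - v : Lp ℝ (ENNReal.ofReal q) ν) y| ^ q)
      =ᵐ[ν] fun y => |u n y - v y| ^ q := fun n => by
    filter_upwards [Lp.coeFn_sub (u n) v] with y hy
    rw [hy, Pi.sub_apply]
  have hnorm_sub : ∀ n, ‖u n - v‖ ^ q = ∫ y, |u n y - v y| ^ q ∂ν := fun n => by
    rw [norm_rpow_eq_integral hq₀, integral_congr_ae (hsub n)]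
  simp only [norm_rpow_eq_integral hq₀ (u _), norm_rpow_eq_integral hq₀ v, hnorm_sub]
  refine tendsto_integral_rpow_sub_integral_rpow_sub hq (M := M ^ q)
    (fun n => integrable_abs_rpow hq₀ (u n))
    (fun n => (integrable_abs_rpow hq₀ (u n - v)).congr (hsub n)) (integrable_abs_rpow hq₀ v)
    (fun n => ?_) hae
  rw [← hnorm_sub]
  exact Real.rpow_le_rpow (norm_nonneg _) (hM n) hq₀.le

end MeasureTheory.Lp

section OperatorNorm

variable {E F : Type*} [NormedAddCommGroup E] [NormedSpace ℝ E] [SeminormedAddCommGroup F]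
  [NormedSpace ℝ F]

theorem ContinuousLinearMap.norm_apply_rpow_le (A : E →L[ℝ] F) {q : ℝ} (hq : 0 ≤ q) (g : E) :
    ‖A g‖ ^ q ≤ ‖A‖ ^ q * ‖g‖ ^ q := by
  rw [← Real.mul_rpow (norm_nonneg _) (norm_nonneg _)]
  exact Real.rpow_le_rpow (norm_nonneg _) (A.le_opNorm g) hq

theorem ContinuousLinearMap.sSup_norm_apply_rpow_eq [Nontrivial E] (A : E →L[ℝ] F) {q : ℝ}
    (hq : 0 ≤ q) : sSup {c : ℝ | ∃ g : E, ‖g‖ = 1 ∧ c = ‖A g‖ ^ q} = ‖A‖ ^ q := by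
  have hset : {c : ℝ | ∃ g : E, ‖g‖ = 1 ∧ c = ‖A g‖ ^ q}
      = (· ^ q) '' ((fun g => ‖A g‖) '' Metric.sphere 0 1) := by
    ext c
    simp [eq_comm]
  rw [hset, ← A.sSup_sphere_eq_norm]
  refine (MonotoneOn.map_csSup_of_continuousWithinAt
    (Real.continuous_rpow_const hq).continuousWithinAt ?_ ?_ ?_).symm
  · exact (Real.monotoneOn_rpow_Ici_of_exponent_nonneg hq).mono
      (by rintro _ ⟨g, -, rfl⟩; exact norm_nonneg _)
  · exact ((NormedSpace.sphere_nonempty.2 zero_le_one).image _)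
  · exact ⟨‖A‖, by rintro _ ⟨g, hg, rfl⟩; simpa [mem_sphere_zero_iff_norm.1 hg] using A.le_opNorm g⟩

end OperatorNorm

theorem tendsto_norm_sub_sq_of_tendsto_inner {H : Type*} [NormedAddCommGroup H]
    [InnerProductSpace ℝ H] {f : ℕ → H} {g : H} {r : ℝ}
    (hf : Tendsto (fun n => ‖f n‖) atTop (𝓝 r))
    (hfg : Tendsto (fun n => ⟪f n, g⟫) atTop (𝓝 ⟪g, g⟫)) :
    Tendsto (fun n => ‖f n - g‖ ^ 2) atTop (𝓝 (r ^ 2 - ‖g‖ ^ 2)) := by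
  simp only [norm_sub_sq_real]
  rw [real_inner_self_eq_norm_sq] at hfg
  convert ((hf.pow 2).sub (hfg.const_mul 2)).add_const (‖g‖ ^ 2) using 2
  ring

theorem lieb_compactness_hilbert_general {H : Type*} [NormedAddCommGroup H]
    [InnerProductSpace ℝ H]
    {Y : Type*} [MeasurableSpace Y] (ν : Measure Y)
    (q : ℝ) (hq : 2 < q) [Fact (1 ≤ ENNReal.ofReal q)]
    (A : H →L[ℝ] Lp ℝ (ENNReal.ofReal q) ν) (hA : A ≠ 0)
    (S : ℝ) (hS : S = sSup {c : ℝ | ∃ g : H, ‖g‖ = 1 ∧ c = ‖A g‖ ^ q})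
    (f : ℕ → H) (flim : H)
    (hnorm : ∀ n, ‖f n‖ = 1)
    (hmax : Tendsto (fun n => ‖A (f n)‖ ^ q) atTop (nhds S))
    (hweak : ∀ y : H, Tendsto (fun n => ⟪f n, y⟫) atTop (nhds ⟪flim, y⟫))
    (hflim_ne : flim ≠ 0)
    (hAae : ∀ᵐ y ∂ν, Tendsto (fun n => (A (f n) : Y → ℝ) y) atTop
      (nhds ((A flim : Y → ℝ) y))) :
    Tendsto (fun n => ‖f n - flim‖) atTop (nhds 0) ∧ ‖A flim‖ ^ q = S := by
  have hq₀ : 0 ≤ q := by linarith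
  have : Nontrivial H := nontrivial_of_ne flim 0 hflim_ne
  rw [A.sSup_norm_apply_rpow_eq hq₀] at hS
  subst hS
  set l := ‖flim‖
  have hsq : Tendsto (fun n => ‖f n - flim‖ ^ 2) atTop (𝓝 (1 - l ^ 2)) := by
    simpa using tendsto_norm_sub_sq_of_tendsto_inner (r := 1) (by simp [hnorm]) (hweak flim)
  have hdist : Tendsto (fun n => ‖f n - flim‖) atTop (𝓝 √(1 - l ^ 2)) := by
    simpa [Real.sqrt_sq (norm_nonneg _)] using hsq.sqrt
  have hrem : Tendsto (fun n => ‖A (f n - flim)‖ ^ q) atTop (𝓝 (‖A‖ ^ q - ‖A flim‖ ^ q)) := by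
    have hbdd : ∀ n, ‖A (f n) - A flim‖ ≤ ‖A‖ + ‖A flim‖ := fun n =>
      (norm_sub_le _ _).trans (by simpa [hnorm n] using A.le_opNorm (f n))
    simpa [map_sub] using
      hmax.sub (Lp.tendsto_norm_rpow_sub_norm_sub_rpow (by linarith) hbdd hAae)
  have hrem_le : ‖A‖ ^ q - ‖A flim‖ ^ q ≤ ‖A‖ ^ q * √(1 - l ^ 2) ^ q :=
    le_of_tendsto_of_tendsto' hrem ((hdist.rpow_const (Or.inr hq₀)).const_mul _)
      fun n => A.norm_apply_rpow_le hq₀ _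
  have hl_one : l = 1 := by
    by_contra hne
    have hl_le : l ≤ 1 := by
      nlinarith [norm_nonneg flim, ge_of_tendsto' hsq fun n => sq_nonneg _]
    have hlt := rpow_add_sqrt_one_sub_sq_rpow_lt_one hq (norm_pos_iff.2 hflim_ne)
      (lt_of_le_of_ne hl_le hne)
    nlinarith [A.norm_apply_rpow_le hq₀ flim, Real.rpow_pos_of_pos (norm_pos_iff.2 hA) q]
  have hconv : Tendsto (fun n => ‖f n - flim‖) atTop (𝓝 0) := by simpa [hl_one] using hdist
  refine ⟨hconv, tendsto_nhds_unique ?_ hmax⟩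
  exact (((A.continuous.tendsto flim).comp (tendsto_iff_norm_sub_tendsto_zero.2 hconv)).norm
    ).rpow_const (Or.inr hq₀)

/-- **Hilbert-space version of Lieb's compactness lemma**: for a nonzero bounded linear
operator `A` from a separable Hilbert space `H` into `L^q(Y)` with `q > 2`, a maximizing
sequence of unit vectors converging weakly to a nonzero limit, whose images converge a.e.,
converges strongly and the weak limit is a maximizer. -/
theorem lieb_compactness_hilbert {H : Type*} [NormedAddCommGroup H]
    [InnerProductSpace ℝ H] [CompleteSpace H] [TopologicalSpace.SeparableSpace H]
    {Y : Type*} [MeasurableSpace Y] (ν : Measure Y)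
    (q : ℝ) (hq : 2 < q) [Fact (1 ≤ ENNReal.ofReal q)]
    (A : H →L[ℝ] Lp ℝ (ENNReal.ofReal q) ν) (hA : A ≠ 0)
    (S : ℝ) (hS : S = sSup {c : ℝ | ∃ g : H, ‖g‖ = 1 ∧ c = ‖A g‖ ^ q})
    (f : ℕ → H) (flim : H)
    (hnorm : ∀ n, ‖f n‖ = 1)
    (hmax : Tendsto (fun n => ‖A (f n)‖ ^ q) atTop (nhds S))
    (hweak : ∀ y : H, Tendsto (fun n => ⟪f n, y⟫) atTop (nhds ⟪flim, y⟫))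
    (hflim_ne : flim ≠ 0)
    (hAae : ∀ᵐ y ∂ν, Tendsto (fun n => (A (f n) : Y → ℝ) y) atTop
      (nhds ((A flim : Y → ℝ) y))) :
    Tendsto (fun n => ‖f n - flim‖) atTop (nhds 0) ∧ ‖A flim‖ ^ q = S :=
  lieb_compactness_hilbert_general ν q hq A hA S hS f flim hnorm hmax hweak hflim_ne hAae
end

section
/- Let $d \ge 1$, $0 < \lambda < d$, $1 < p < \infty$, and suppose $1/p + \lambda/d > 1$, so that $y \mapsto |y|^{-d/p}|x-y|^{-\lambda}$ is integrable on $\mathbb{R}^d$ for each $x \ne 0$. For each $n$, let $f_n : \mathbb{R}^d \to [0,\infty)$ be radial, radially decreasing, with $\|f_n\|_{L^p} = 1$, and suppose $f_n \to f$ almost everywhere. Then for almost every $x \in \mathbb{R}^d$, $\int_{\mathbb{R}^d} f_n(y) |x-y|^{-\lambda} \, dy \to \int_{\mathbb{R}^d} f(y) |x-y|^{-\lambda} \, dy$. -/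
open MeasureTheory Filter
open scoped ENNReal NNReal

section Aux

open Metric Set

variable {X : Type*} [NormedAddCommGroup X]

/-- A radially antitone function is measurable. -/
lemma measurable_radial [MeasurableSpace X] [OpensMeasurableSpace X]
    [MeasurableSingletonClass X]
    (φ : ℝ → ℝ) (hm : AntitoneOn φ (Set.Ioi 0)) :
    Measurable (fun x : X => φ ‖x‖) := by
  apply measurable_of_Iio
  intro c
  have hpre : (fun x : X => φ ‖x‖) ⁻¹' Iio c = (fun x : X => ‖x‖) ⁻¹' {t | φ t < c} := rfl
  rw [hpre]
  set T : Set ℝ := {t | φ t < c} with hT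
  have hsplit : (fun x : X => ‖x‖) ⁻¹' T
      = ((fun x : X => ‖x‖) ⁻¹' (T ∩ Ioi 0)) ∪ ((fun x : X => ‖x‖) ⁻¹' (T ∩ Iic 0)) := by
    rw [← preimage_union, ← inter_union_distrib_left]
    have huniv : Ioi (0:ℝ) ∪ Iic 0 = univ := by rw [union_comm]; exact Iic_union_Ioi
    rw [huniv, inter_univ]
  rw [hsplit]
  have h2 : ((fun x : X => ‖x‖) ⁻¹' (T ∩ Iic 0)).Subsingleton := by
    intro x hx y hy
    have hx0 : x = 0 := norm_le_zero_iff.1 hx.2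
    have hy0 : y = 0 := norm_le_zero_iff.1 hy.2
    rw [hx0, hy0]
  have hS : MeasurableSet (T ∩ Ioi 0) := by
    rcases eq_empty_or_nonempty (T ∩ Ioi 0) with h | h
    · simp [h]
    have hbdd : BddBelow (T ∩ Ioi 0) := ⟨0, fun t ht => le_of_lt ht.2⟩
    set b := sInf (T ∩ Ioi 0) with hb
    have hIoi : Ioi b ⊆ T ∩ Ioi 0 := by
      intro t ht
      obtain ⟨s, hsS, hst⟩ := (csInf_lt_iff hbdd h).1 ht
      have hs0 : (0:ℝ) < s := hsS.2
      have ht0 : (0:ℝ) < t := hs0.trans hst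
      exact ⟨lt_of_le_of_lt (hm hsS.2 (mem_Ioi.2 ht0) hst.le) hsS.1, ht0⟩
    have hsub : T ∩ Ioi 0 ⊆ Ici b := fun s hs => csInf_le hbdd hs
    have heq : T ∩ Ioi 0 = Ioi b ∪ ((T ∩ Ioi 0) ∩ {b}) := by
      apply Subset.antisymm
      · intro s hs
        rcases eq_or_lt_of_le (mem_Ici.1 (hsub hs)) with h' | h'
        · exact Or.inr ⟨hs, h'.symm⟩
        · exact Or.inl h'
      · rintro s (hs | hs)
        exacts [hIoi hs, hs.1]
    rw [heq]
    exact measurableSet_Ioi.union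
      ((Set.subsingleton_singleton.anti inter_subset_right).measurableSet)
  exact (measurable_norm hS).union h2.measurableSet

variable [NormedSpace ℝ X] [MeasurableSpace X] [BorelSpace X] [FiniteDimensional ℝ X]
  (μ : Measure X) [μ.IsAddHaarMeasure]

/-- `‖y‖ ^ (-s)` is integrable on balls when `s < dim`. -/
lemma integrableOn_rpow_neg_norm_ball [Nontrivial X] {s : ℝ} (hs0 : 0 ≤ s)
    (hsd : s < Module.finrank ℝ X) (R : ℝ) :
    IntegrableOn (fun y : X => ‖y‖ ^ (-s)) (ball 0 R) μ := by
  rcases le_or_gt R 0 with hR | hR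
  · rw [ball_eq_empty.2 hR]
    exact integrableOn_empty
  set n : ℕ := Module.finrank ℝ X with hn
  set v : ℝ≥0∞ := μ (ball (0:X) 1) with hv
  have hvt : v ≠ ⊤ := measure_ball_lt_top.ne
  constructor
  · exact (Measurable.aestronglyMeasurable (by fun_prop))
  · rw [hasFiniteIntegral_iff_ofReal]
    swap
    · exact Eventually.of_forall fun y => Real.rpow_nonneg (norm_nonneg y) _
    -- annuli
    set A : ℕ → Set X := fun k => ball 0 (R / 2 ^ k) \ ball 0 (R / 2 ^ (k + 1)) with hA
    have hcover : ball (0:X) R ⊆ {0} ∪ ⋃ k, A k := by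
      intro y hy
      by_cases h0 : y = 0
      · exact Or.inl (by simp [h0])
      right
      have hy0 : 0 < ‖y‖ := norm_pos_iff.2 h0
      have hyR : ‖y‖ < R := by simpa [mem_ball, dist_zero_right] using hy
      have hex : ∃ k : ℕ, R / 2 ^ (k + 1) ≤ ‖y‖ := by
        obtain ⟨k, hk⟩ := pow_unbounded_of_one_lt (R / ‖y‖) (one_lt_two (α := ℝ))
        refine ⟨k, ?_⟩
        rw [div_le_iff₀ (by positivity)]
        rw [div_lt_iff₀ hy0] at hk
        have : (2:ℝ) ^ k ≤ 2 ^ (k+1) := by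
          apply pow_le_pow_right₀ one_le_two (Nat.le_succ k)
        nlinarith [hy0]
      classical
      set k := Nat.find hex with hk
      have h1 : R / 2 ^ (k + 1) ≤ ‖y‖ := Nat.find_spec hex
      have h2 : ‖y‖ < R / 2 ^ k := by
        rcases Nat.eq_zero_or_pos k with h | h
        · simpa [h] using hyR
        · have := Nat.find_min hex (m := k - 1) (by omega)
          push_neg at this
          have hk1 : k - 1 + 1 = k := by omega
          simpa [hk1] using this
      refine mem_iUnion.2 ⟨k, ?_, ?_⟩
      · simpa [mem_ball, dist_zero_right] using h2
      · simp [mem_ball, dist_zero_right, not_lt, h1]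
    have hle1 : ∫⁻ y in ball (0:X) R, ENNReal.ofReal (‖y‖ ^ (-s)) ∂μ
        ≤ ∫⁻ y in ({0} ∪ ⋃ k, A k : Set X), ENNReal.ofReal (‖y‖ ^ (-s)) ∂μ :=
      lintegral_mono_set hcover
    have h0 : μ ({0} : Set X) = 0 := by
      have := Measure.addHaar_sphere μ 0 0
      simpa using this
    have hsingle : ∫⁻ y in ({0}:Set X), ENNReal.ofReal (‖y‖ ^ (-s)) ∂μ = 0 :=
      setLIntegral_measure_zero _ _ h0
    -- per-annulus bound
    set u : ℕ → ℝ := fun k => (R / 2 ^ (k+1)) ^ (-s) * (R / 2 ^ k) ^ n with hu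
    have hterm : ∀ k, ∫⁻ y in A k, ENNReal.ofReal (‖y‖ ^ (-s)) ∂μ
        ≤ ENNReal.ofReal (u k) * v := by
      intro k
      have hAm : MeasurableSet (A k) := measurableSet_ball.diff measurableSet_ball
      have hb : ∫⁻ y in A k, ENNReal.ofReal (‖y‖ ^ (-s)) ∂μ
          ≤ ∫⁻ _ in A k, ENNReal.ofReal ((R / 2 ^ (k+1)) ^ (-s)) ∂μ := by
        apply setLIntegral_mono' hAm
        intro y hy
        apply ENNReal.ofReal_le_ofReal
        have hylb : R / 2 ^ (k + 1) ≤ ‖y‖ := by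
          have := hy.2
          simpa [mem_ball, dist_zero_right, not_lt] using this
        exact Real.rpow_le_rpow_of_nonpos (by positivity) hylb (neg_nonpos.2 hs0)
      rw [setLIntegral_const] at hb
      refine hb.trans ?_
      have hmono : μ (A k) ≤ μ (ball (0:X) (R / 2 ^ k)) := measure_mono diff_subset
      have hball : μ (ball (0:X) (R / 2 ^ k)) = ENNReal.ofReal ((R / 2 ^ k) ^ n) * v := by
        rw [Measure.addHaar_ball μ 0 (by positivity : (0:ℝ) ≤ R / 2 ^ k)]
      calc ENNReal.ofReal ((R / 2 ^ (k+1)) ^ (-s)) * μ (A k)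
          ≤ ENNReal.ofReal ((R / 2 ^ (k+1)) ^ (-s)) * (ENNReal.ofReal ((R / 2 ^ k) ^ n) * v) := by
            rw [← hball]; exact mul_le_mul_right hmono _
        _ = ENNReal.ofReal (u k) * v := by
            rw [← mul_assoc, ← ENNReal.ofReal_mul (Real.rpow_nonneg (by positivity) _)]
    -- geometric structure
    set q : ℝ := 2 ^ s / 2 ^ n with hq
    have hq0 : 0 ≤ q := by positivity
    have hq1 : q < 1 := by
      rw [div_lt_one (by positivity)]
      calc (2:ℝ) ^ s < 2 ^ (n:ℝ) := by
            exact Real.rpow_lt_rpow_of_exponent_lt one_lt_two hsd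
        _ = 2 ^ n := by rw [Real.rpow_natCast]
    have hrec : ∀ k, u (k + 1) = u k * q := by
      intro k
      have e1 : R / 2 ^ (k + 2) = (R / 2 ^ (k+1)) / 2 := by rw [div_div, ← pow_succ]
      have e2 : R / 2 ^ (k + 1) = (R / 2 ^ k) / 2 := by rw [div_div, ← pow_succ]
      have f1 : (R / 2 ^ (k + 2)) ^ (-s) = (R / 2 ^ (k+1)) ^ (-s) * 2 ^ s := by
        rw [e1, Real.div_rpow (by positivity) (by norm_num),
          Real.rpow_neg (by norm_num : (0:ℝ) ≤ 2), div_eq_mul_inv, inv_inv]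
      have f2 : (R / 2 ^ (k + 1)) ^ n = (R / 2 ^ k) ^ n / 2 ^ n := by rw [e2, div_pow]
      show (R / 2 ^ (k + 1 + 1)) ^ (-s) * (R / 2 ^ (k + 1)) ^ n = u k * q
      rw [show k + 1 + 1 = k + 2 from rfl, f1, f2, hu, hq]
      ring
    have hclosed : ∀ k, u k = u 0 * q ^ k := by
      intro k
      induction k with
      | zero => simp
      | succ m ih => rw [hrec m, ih, pow_succ, mul_assoc]
    have hsum : ∑' k, ENNReal.ofReal (u k) * v
        = ENNReal.ofReal (u 0) * (1 - ENNReal.ofReal q)⁻¹ * v := by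
      rw [ENNReal.tsum_mul_right]
      congr 1
      calc ∑' k, ENNReal.ofReal (u k)
          = ∑' k, ENNReal.ofReal (u 0) * ENNReal.ofReal q ^ k := by
            have hu0 : 0 ≤ u 0 :=
              mul_nonneg (Real.rpow_nonneg (by positivity) _) (by positivity)
            congr 1; funext k
            rw [hclosed k, ENNReal.ofReal_mul hu0, ENNReal.ofReal_pow hq0]
        _ = ENNReal.ofReal (u 0) * ∑' k, ENNReal.ofReal q ^ k := ENNReal.tsum_mul_left
        _ = ENNReal.ofReal (u 0) * (1 - ENNReal.ofReal q)⁻¹ := by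
            rw [ENNReal.tsum_geometric]
    have hfin : ∑' k, ENNReal.ofReal (u k) * v < ⊤ := by
      rw [hsum]
      apply ENNReal.mul_lt_top (ENNReal.mul_lt_top ENNReal.ofReal_lt_top ?_) hvt.lt_top
      rw [ENNReal.inv_lt_top]
      exact tsub_pos_of_lt (ENNReal.ofReal_lt_one.2 hq1)
    calc ∫⁻ y in ball (0:X) R, ENNReal.ofReal (‖y‖ ^ (-s)) ∂μ
        ≤ ∫⁻ y in ({0} ∪ ⋃ k, A k : Set X), ENNReal.ofReal (‖y‖ ^ (-s)) ∂μ := hle1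
      _ ≤ (∫⁻ y in ({0}:Set X), ENNReal.ofReal (‖y‖ ^ (-s)) ∂μ)
          + ∫⁻ y in (⋃ k, A k : Set X), ENNReal.ofReal (‖y‖ ^ (-s)) ∂μ :=
            lintegral_union_le _ _ _
      _ ≤ 0 + ∑' k, ∫⁻ y in A k, ENNReal.ofReal (‖y‖ ^ (-s)) ∂μ := by
            rw [hsingle]; exact add_le_add le_rfl (lintegral_iUnion_le _ _)
      _ ≤ 0 + ∑' k, ENNReal.ofReal (u k) * v := by
            exact add_le_add le_rfl (ENNReal.tsum_le_tsum hterm)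
      _ < ⊤ := by simpa using hfin

/-- `‖y‖ ^ (-s)` is integrable outside a ball when `s > dim`. -/
lemma integrableOn_rpow_neg_norm_compl {s R : ℝ}
    (hds : (Module.finrank ℝ X : ℝ) < s) (hR : 0 < R) :
    IntegrableOn (fun y : X => ‖y‖ ^ (-s)) (ball 0 R)ᶜ μ := by
  have hs0 : 0 ≤ s := le_of_lt (lt_of_le_of_lt (Nat.cast_nonneg _) hds)
  have hint := ((integrable_one_add_norm (μ := μ) hds).const_mul
    ((R / (1+R)) ^ (-s))).integrableOn (s := (ball (0:X) R)ᶜ)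
  apply hint.mono' (Measurable.aestronglyMeasurable (by fun_prop))
  filter_upwards [ae_restrict_mem measurableSet_ball.compl] with y hy
  have hRy : R ≤ ‖y‖ := by
    simpa [mem_ball, dist_zero_right, not_lt] using hy
  have hk : R / (1+R) * (1 + ‖y‖) ≤ ‖y‖ := by
    rw [div_mul_eq_mul_div, div_le_iff₀ (by positivity)]
    nlinarith [norm_nonneg y]
  rw [Real.norm_eq_abs, abs_of_nonneg (Real.rpow_nonneg (norm_nonneg y) _)]
  calc ‖y‖ ^ (-s) ≤ (R/(1+R) * (1+‖y‖)) ^ (-s) :=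
        Real.rpow_le_rpow_of_nonpos (by positivity) hk (neg_nonpos.2 hs0)
    _ = (R/(1+R)) ^ (-s) * (1+‖y‖) ^ (-s) :=
        Real.mul_rpow (by positivity) (by positivity)

lemma measurePreserving_const_sub' (x : X) : MeasurePreserving (fun y : X => x - y) μ μ := by
  have h1 : MeasurePreserving (fun y : X => -y) μ μ := Measure.measurePreserving_neg μ
  have h2 : MeasurePreserving (fun y : X => x + y) μ μ := measurePreserving_add_left μ x
  have := h2.comp h1
  simpa [Function.comp_def, sub_eq_add_neg] using this

end Aux

section Dom

open Metric Set

/-- Integrability of the dominating function for the Riesz potential. -/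
lemma riesz_dom_integrable {d : ℕ} (hd : 1 ≤ d) {a lam : ℝ} (ha0 : 0 < a) (had : a < d)
    (hlam0 : 0 < lam) (hlamd : lam < d) (hsum : (d:ℝ) < a + lam)
    (x : EuclideanSpace ℝ (Fin d)) (hx : x ≠ 0) :
    Integrable (fun y : EuclideanSpace ℝ (Fin d) => ‖y‖ ^ (-a) * ‖x - y‖ ^ (-lam)) volume := by
  haveI : Nonempty (Fin d) := ⟨⟨0, hd⟩⟩
  have hfr : (Module.finrank ℝ (EuclideanSpace ℝ (Fin d)) : ℝ) = (d : ℝ) := by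
    rw [finrank_euclideanSpace_fin]
  set r : ℝ := ‖x‖ / 2 with hrdef
  have hr : 0 < r := by
    have : 0 < ‖x‖ := norm_pos_iff.2 hx
    positivity
  have hxr : ‖x‖ = 2 * r := by rw [hrdef]; ring
  have hmeas : AEStronglyMeasurable (fun y : EuclideanSpace ℝ (Fin d) => ‖y‖ ^ (-a) * ‖x - y‖ ^ (-lam)) volume :=
    Measurable.aestronglyMeasurable (by fun_prop)
  have hnn : ∀ y : EuclideanSpace ℝ (Fin d), 0 ≤ ‖y‖ ^ (-a) * ‖x - y‖ ^ (-lam) := fun y =>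
    mul_nonneg (Real.rpow_nonneg (norm_nonneg _) _) (Real.rpow_nonneg (norm_nonneg _) _)
  rw [← integrableOn_univ, ← union_compl_self (ball (0 : EuclideanSpace ℝ (Fin d)) r ∪ ball x r), union_assoc]
  apply IntegrableOn.union
  · -- near 0
    have hbase : IntegrableOn (fun y : EuclideanSpace ℝ (Fin d) => ‖y‖ ^ (-a) * r ^ (-lam)) (ball 0 r) volume := by
      apply Integrable.mul_const
      exact integrableOn_rpow_neg_norm_ball volume ha0.le (by rw [hfr]; exact had) r
    apply hbase.mono' (hmeas.restrict)
    filter_upwards [ae_restrict_mem measurableSet_ball] with y hy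
    have hyr : ‖y‖ < r := by simpa [mem_ball, dist_zero_right] using hy
    have hxy : r ≤ ‖x - y‖ := by
      have h1 : ‖x‖ - ‖y‖ ≤ ‖x - y‖ := norm_sub_norm_le x y
      nlinarith
    rw [Real.norm_eq_abs, abs_of_nonneg (hnn y)]
    apply mul_le_mul_of_nonneg_left _ (Real.rpow_nonneg (norm_nonneg _) _)
    exact Real.rpow_le_rpow_of_nonpos hr hxy (neg_nonpos.2 hlam0.le)
  apply IntegrableOn.union
  · -- near x
    have hb0 : IntegrableOn (fun z : EuclideanSpace ℝ (Fin d) => ‖z‖ ^ (-lam)) (ball 0 r) volume :=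
      integrableOn_rpow_neg_norm_ball volume hlam0.le (by rw [hfr]; exact hlamd) r
    have hTm : MeasurePreserving (fun y : EuclideanSpace ℝ (Fin d) => x - y) volume volume :=
      measurePreserving_const_sub' volume x
    have hTe : MeasurableEmbedding (fun y : EuclideanSpace ℝ (Fin d) => x - y) :=
      (Homeomorph.subLeft x).measurableEmbedding
    have hpre : (fun y : EuclideanSpace ℝ (Fin d) => x - y) ⁻¹' (ball 0 r) = ball x r := by
      ext y
      rw [mem_preimage, mem_ball, mem_ball, dist_zero_right, dist_eq_norm, norm_sub_rev y x]
    have hint2 : IntegrableOn (fun y : EuclideanSpace ℝ (Fin d) => ‖x - y‖ ^ (-lam)) (ball x r) volume := by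
      have := (hTm.integrableOn_comp_preimage hTe
        (f := fun z : EuclideanSpace ℝ (Fin d) => ‖z‖ ^ (-lam)) (s := ball 0 r)).2 hb0
      rw [hpre] at this
      exact this
    have hbase := hint2.const_mul (r ^ (-a))
    apply hbase.mono' (hmeas.restrict)
    filter_upwards [ae_restrict_mem measurableSet_ball] with y hy
    have hyx : ‖x - y‖ < r := by
      have : dist y x < r := by simpa [mem_ball] using hy
      rw [dist_eq_norm, norm_sub_rev] at this
      exact this
    have hyn : r ≤ ‖y‖ := by
      have h1 : ‖x‖ - ‖x - y‖ ≤ ‖x - (x - y)‖ := norm_sub_norm_le x (x - y)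
      rw [sub_sub_cancel] at h1
      nlinarith
    rw [Real.norm_eq_abs, abs_of_nonneg (hnn y)]
    apply mul_le_mul_of_nonneg_right _ (Real.rpow_nonneg (norm_nonneg _) _)
    exact Real.rpow_le_rpow_of_nonpos hr hyn (neg_nonpos.2 ha0.le)
  · -- far away
    have hbase : IntegrableOn (fun y : EuclideanSpace ℝ (Fin d) => ‖y‖ ^ (-(a + lam)) * 4 ^ lam)
        ((ball (0 : EuclideanSpace ℝ (Fin d)) r ∪ ball x r)ᶜ) volume := by
      apply Integrable.mul_const
      apply (integrableOn_rpow_neg_norm_compl volume (by rw [hfr]; exact hsum) hr).mono_set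
      exact compl_subset_compl.2 subset_union_left
    apply hbase.mono' (hmeas.restrict)
    filter_upwards [ae_restrict_mem (measurableSet_ball.union measurableSet_ball).compl]
      with y hy
    have hy1 : r ≤ ‖y‖ := by
      have : y ∉ ball (0 : EuclideanSpace ℝ (Fin d)) r := fun h => hy (Or.inl h)
      simpa [mem_ball, dist_zero_right, not_lt] using this
    have hy2 : r ≤ ‖x - y‖ := by
      have : y ∉ ball x r := fun h => hy (Or.inr h)
      have h2 : ¬ dist y x < r := by simpa [mem_ball] using this
      rw [dist_eq_norm, norm_sub_rev] at h2
      exact not_lt.1 h2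
    have hy0 : 0 < ‖y‖ := lt_of_lt_of_le hr hy1
    have hkey : ‖y‖ / 4 ≤ ‖x - y‖ := by
      rcases le_total (‖y‖) (4 * r) with h | h
      · nlinarith
      · have h1 : ‖y‖ - ‖x‖ ≤ ‖y - x‖ := norm_sub_norm_le y x
        rw [norm_sub_rev] at h1
        nlinarith
    rw [Real.norm_eq_abs, abs_of_nonneg (hnn y)]
    calc ‖y‖ ^ (-a) * ‖x - y‖ ^ (-lam)
        ≤ ‖y‖ ^ (-a) * (‖y‖ / 4) ^ (-lam) := by
          apply mul_le_mul_of_nonneg_left _ (Real.rpow_nonneg (norm_nonneg _) _)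
          exact Real.rpow_le_rpow_of_nonpos (by positivity) hkey (neg_nonpos.2 hlam0.le)
      _ = ‖y‖ ^ (-(a + lam)) * 4 ^ lam := by
          rw [Real.div_rpow (norm_nonneg _) (by norm_num),
            Real.rpow_neg (by norm_num : (0:ℝ) ≤ 4), div_eq_mul_inv, inv_inv,
            ← mul_assoc, ← Real.rpow_add hy0, neg_add]

end Dom

section Main

open Metric Set

/-- The uniform pointwise bound for normalized radially decreasing functions. -/
lemma radial_pointwise_bound {d : ℕ} (hd : 1 ≤ d) {p : ℝ} (hp0 : 0 < p)
    {g : EuclideanSpace ℝ (Fin d) → ℝ} {φ : ℝ → ℝ}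
    (hrad : ∀ x, g x = φ ‖x‖) (hmono : AntitoneOn φ (Set.Ioi (0:ℝ)))
    (hnonneg : ∀ x, 0 ≤ g x)
    (hnorm : eLpNorm g (ENNReal.ofReal p) volume = 1)
    (y : EuclideanSpace ℝ (Fin d)) (hy : y ≠ 0) :
    g y ≤ (volume (ball (0 : EuclideanSpace ℝ (Fin d)) 1)).toReal ^ (-p⁻¹)
      * ‖y‖ ^ (-((d:ℝ)/p)) := by
  haveI : Nonempty (Fin d) := ⟨⟨0, hd⟩⟩
  set v : ℝ≥0∞ := volume (ball (0 : EuclideanSpace ℝ (Fin d)) 1) with hv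
  have hv0 : v ≠ 0 := (measure_ball_pos volume 0 one_pos).ne'
  have hvt : v ≠ ⊤ := measure_ball_lt_top.ne
  have hw0 : 0 < v.toReal := ENNReal.toReal_pos hv0 hvt
  set r : ℝ := ‖y‖ with hrdef
  have hr : 0 < r := norm_pos_iff.2 hy
  -- the Lᵖ norm as a lintegral
  have hI : ∫⁻ z, (‖g z‖₊ : ℝ≥0∞) ^ p ∂volume = 1 := by
    have h := hnorm
    rw [eLpNorm_eq_lintegral_rpow_enorm_toReal (by simp [hp0] : ENNReal.ofReal p ≠ 0)
      ENNReal.ofReal_ne_top, ENNReal.toReal_ofReal hp0.le] at h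
    have h2 := congrArg (· ^ p) h
    simp only [← ENNReal.rpow_mul, one_div, inv_mul_cancel₀ hp0.ne', ENNReal.rpow_one,
      ENNReal.one_rpow] at h2
    exact h2
  have hfr : Module.finrank ℝ (EuclideanSpace ℝ (Fin d)) = d := finrank_euclideanSpace_fin
  -- lower bound by the value on the ball of radius r
  have hkey : ENNReal.ofReal (g y) ^ p * (ENNReal.ofReal (r ^ (d:ℝ)) * v) ≤ 1 := by
    have hball : volume (ball (0 : EuclideanSpace ℝ (Fin d)) r) = ENNReal.ofReal (r ^ (d:ℝ)) * v := by
      rw [Measure.addHaar_ball volume 0 hr.le, hfr, ← Real.rpow_natCast r d]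
    calc ENNReal.ofReal (g y) ^ p * (ENNReal.ofReal (r ^ (d:ℝ)) * v)
        = ∫⁻ _ in ball (0 : EuclideanSpace ℝ (Fin d)) r, ENNReal.ofReal (g y) ^ p ∂volume := by
          rw [setLIntegral_const, hball]
      _ ≤ ∫⁻ z in ball (0 : EuclideanSpace ℝ (Fin d)) r, (‖g z‖₊ : ℝ≥0∞) ^ p ∂volume := by
          apply lintegral_mono_ae
          have hz0 : ∀ᵐ z : EuclideanSpace ℝ (Fin d) ∂(volume.restrict (ball (0 : EuclideanSpace ℝ (Fin d)) r)), z ≠ 0 := by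
            apply ae_restrict_of_ae
            rw [ae_iff]
            have : {z : EuclideanSpace ℝ (Fin d) | ¬ z ≠ 0} = {(0 : EuclideanSpace ℝ (Fin d))} := by ext z; simp
            rw [this]
            have := Measure.addHaar_sphere (volume : Measure (EuclideanSpace ℝ (Fin d))) 0 0
            simpa using this
          filter_upwards [ae_restrict_mem measurableSet_ball, hz0] with z hz hz0
          have hzr : ‖z‖ < r := by simpa [mem_ball, dist_zero_right] using hz
          have hzpos : 0 < ‖z‖ := norm_pos_iff.2 hz0
          have hgz : g y ≤ g z := by
            rw [hrad y, hrad z]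
            exact hmono (mem_Ioi.2 hzpos) (mem_Ioi.2 hr) hzr.le
          have h1 : ENNReal.ofReal (g y) ≤ (‖g z‖₊ : ℝ≥0∞) := by
            rw [← enorm_eq_nnnorm, Real.enorm_eq_ofReal (hnonneg z)]
            exact ENNReal.ofReal_le_ofReal hgz
          exact ENNReal.rpow_le_rpow h1 hp0.le
      _ ≤ ∫⁻ z, (‖g z‖₊ : ℝ≥0∞) ^ p ∂volume := setLIntegral_le_lintegral _ _
      _ = 1 := hI
  have hbt : ENNReal.ofReal (r ^ (d:ℝ)) * v ≠ 0 := by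
    apply mul_ne_zero _ hv0
    rw [Ne, ENNReal.ofReal_eq_zero, not_le]
    positivity
  have hbtop : ENNReal.ofReal (r ^ (d:ℝ)) * v ≠ ⊤ :=
    ENNReal.mul_ne_top ENNReal.ofReal_ne_top hvt
  have hle : ENNReal.ofReal (g y) ^ p ≤ (ENNReal.ofReal (r ^ (d:ℝ)) * v)⁻¹ :=
    ENNReal.le_inv_iff_mul_le.2 hkey
  -- pass to real numbers
  have hreal : (g y) ^ p ≤ (r ^ (d:ℝ) * v.toReal)⁻¹ := by
    have h1 : ((ENNReal.ofReal (g y)) ^ p).toReal = (g y) ^ p := by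
      rw [ENNReal.ofReal_rpow_of_nonneg (hnonneg y) hp0.le, ENNReal.toReal_ofReal]
      exact Real.rpow_nonneg (hnonneg y) _
    have h2 : ((ENNReal.ofReal (r ^ (d:ℝ)) * v)⁻¹).toReal = (r ^ (d:ℝ) * v.toReal)⁻¹ := by
      rw [ENNReal.toReal_inv, ENNReal.toReal_mul, ENNReal.toReal_ofReal (by positivity)]
    rw [← h1, ← h2]
    exact ENNReal.toReal_mono (ENNReal.inv_ne_top.2 hbt) hle
  -- take p-th roots
  have hfin : g y = ((g y) ^ p) ^ p⁻¹ := (Real.rpow_rpow_inv (hnonneg y) hp0.ne').symm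
  rw [hfin]
  calc ((g y) ^ p) ^ p⁻¹ ≤ ((r ^ (d:ℝ) * v.toReal)⁻¹) ^ p⁻¹ :=
        Real.rpow_le_rpow (Real.rpow_nonneg (hnonneg y) _) hreal (by positivity)
    _ = (r ^ (d:ℝ) * v.toReal) ^ (-p⁻¹) := by
        rw [Real.inv_rpow (by positivity), ← Real.rpow_neg (by positivity)]
    _ = v.toReal ^ (-p⁻¹) * r ^ (-((d:ℝ)/p)) := by
        have hexp : (d:ℝ) * -p⁻¹ = -((d:ℝ)/p) := by rw [div_eq_mul_inv]; ring
        rw [Real.mul_rpow (by positivity) hw0.le, ← Real.rpow_mul hr.le, hexp, mul_comm]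

end Main

/-- Almost everywhere convergence of Riesz potentials of a normalized sequence of
nonnegative radially decreasing functions converging a.e., under the integrability
condition `1/p + λ/d > 1`. -/
theorem riesz_potential_ae_tendsto (d : ℕ) (hd : 1 ≤ d) (lam p : ℝ)
    (hlam0 : 0 < lam) (hlamd : lam < d) (hp : 1 < p)
    (hcond : 1 / p + lam / d > 1)
    (f : ℕ → EuclideanSpace ℝ (Fin d) → ℝ) (flim : EuclideanSpace ℝ (Fin d) → ℝ)
    (φ : ℕ → ℝ → ℝ)
    (hrad : ∀ n x, f n x = φ n ‖x‖)
    (hmono : ∀ n, AntitoneOn (φ n) (Set.Ioi (0 : ℝ)))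
    (hnonneg : ∀ n x, 0 ≤ f n x)
    (hnorm : ∀ n, eLpNorm (f n) (ENNReal.ofReal p) volume = 1)
    (hae : ∀ᵐ x ∂(volume : Measure (EuclideanSpace ℝ (Fin d))),
      Tendsto (fun n => f n x) atTop (nhds (flim x))) :
    ∀ᵐ x ∂(volume : Measure (EuclideanSpace ℝ (Fin d))),
      Tendsto (fun n => ∫ y, f n y * ‖x - y‖ ^ (-lam)) atTop
        (nhds (∫ y, flim y * ‖x - y‖ ^ (-lam))) := by
  haveI : Nonempty (Fin d) := ⟨⟨0, hd⟩⟩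
  have hp0 : (0:ℝ) < p := lt_trans one_pos hp
  have hd0 : (0:ℝ) < d := by exact_mod_cast Nat.lt_of_lt_of_le Nat.zero_lt_one hd
  set a : ℝ := (d:ℝ) / p with ha
  have ha0 : 0 < a := div_pos hd0 hp0
  have had : a < d := div_lt_self hd0 hp
  have hsum : (d:ℝ) < a + lam := by
    have h1 : (d:ℝ) * (1/p) + (d:ℝ) * (lam/(d:ℝ)) = a + lam := by
      rw [ha]
      field_simp
    have h2 : (d:ℝ) * 1 < (d:ℝ) * (1/p + lam/(d:ℝ)) :=
      mul_lt_mul_of_pos_left hcond hd0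
    rw [mul_add] at h2
    rw [h1] at h2
    simpa using h2
  -- measurability
  have hmeas : ∀ n, Measurable (f n) := by
    intro n
    have h := measurable_radial (X := EuclideanSpace ℝ (Fin d)) (φ n) (hmono n)
    have : f n = fun x : EuclideanSpace ℝ (Fin d) => φ n ‖x‖ := funext fun x => hrad n x
    rw [this]
    exact h
  -- uniform bound
  set c : ℝ := (volume (Metric.ball (0 : EuclideanSpace ℝ (Fin d)) 1)).toReal ^ (-p⁻¹) with hc
  have hbd : ∀ n (y : EuclideanSpace ℝ (Fin d)), y ≠ 0 → f n y ≤ c * ‖y‖ ^ (-a) :=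
    fun n y hy => radial_pointwise_bound hd hp0 (hrad n) (hmono n) (hnonneg n) (hnorm n) y hy
  -- null set of zero
  have hx0 : ∀ᵐ x : EuclideanSpace ℝ (Fin d) ∂volume, x ≠ 0 := by
    rw [ae_iff]
    have h0 : {x : EuclideanSpace ℝ (Fin d) | ¬ x ≠ 0} = {(0 : EuclideanSpace ℝ (Fin d))} := by ext z; simp
    rw [h0]
    have := Measure.addHaar_sphere (volume : Measure (EuclideanSpace ℝ (Fin d))) 0 0
    simpa using this
  filter_upwards [hx0] with x hx
  apply tendsto_integral_of_dominated_convergence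
    (fun y : EuclideanSpace ℝ (Fin d) => c * (‖y‖ ^ (-a) * ‖x - y‖ ^ (-lam)))
  · intro n
    exact ((hmeas n).mul (by fun_prop : Measurable fun y : EuclideanSpace ℝ (Fin d) => ‖x - y‖ ^ (-lam))).aestronglyMeasurable
  · exact (riesz_dom_integrable hd ha0 had hlam0 hlamd hsum x hx).const_mul c
  · intro n
    filter_upwards [hx0] with y hy
    have h1 : 0 ≤ f n y * ‖x - y‖ ^ (-lam) :=
      mul_nonneg (hnonneg n y) (Real.rpow_nonneg (norm_nonneg _) _)
    rw [Real.norm_eq_abs, abs_of_nonneg h1]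
    calc f n y * ‖x - y‖ ^ (-lam) ≤ (c * ‖y‖ ^ (-a)) * ‖x - y‖ ^ (-lam) :=
          mul_le_mul_of_nonneg_right (hbd n y hy) (Real.rpow_nonneg (norm_nonneg _) _)
      _ = c * (‖y‖ ^ (-a) * ‖x - y‖ ^ (-lam)) := by ring
  · filter_upwards [hae] with y hy
    exact hy.mul_const _
end

section
/- Let $d \ge 1$, $s \in (0, d/2)$, $s' \in (0, s)$, and let $\chi \in C^\infty_0((0,\infty))$. There exists $C > 0$ such that for every $u \in H^s(\mathbb{R}^d)$ and every $t > 0$: $t^{(d-2s')/4}\|\chi(-t\Delta)u\|_{L^\infty} \le C \min(t^{-s'/2}\|u\|_{L^2}, \, t^{(s-s')/2}\|u\|_{\dot{H}^s})$. In particular, for any bounded sequence $(u_n)$ in $H^s(\mathbb{R}^d)$, $\sup_n t^{(d-2s')/4}\|\chi(-t\Delta)u_n\|_{L^\infty} \to 0$ as $t \to 0$ and as $t \to \infty$. -/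
open MeasureTheory Filter
open scoped ENNReal NNReal FourierTransform

private lemma aux_fourierInv_zero {d : ℕ} {f : EuclideanSpace ℝ (Fin d) → ℂ}
    (hf : ¬ Integrable f volume) : 𝓕⁻ f = 0 := by
  funext x
  rw [Real.fourierInv_eq_fourier_neg, Real.fourier_eq]
  exact integral_undef fun h => hf ((Real.fourierIntegral_convergent_iff (-x)).1 h)

private lemma aux_eLpNorm_le {d : ℕ} {f : EuclideanSpace ℝ (Fin d) → ℂ}
    (hf : Integrable f volume) :
    eLpNorm (𝓕⁻ f) ⊤ volume ≤ ∫⁻ ξ, ‖f ξ‖₊ := by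
  rw [eLpNorm_exponent_top, eLpNormEssSup]
  refine essSup_le_of_ae_le _ (Filter.Eventually.of_forall fun x => ?_)
  calc ((‖𝓕⁻ f x‖₊ : ℝ≥0) : ℝ≥0∞) = ENNReal.ofReal ‖𝓕⁻ f x‖ := (ofReal_norm_eq_enorm _).symm
    _ ≤ ENNReal.ofReal (∫ ξ, ‖f ξ‖) := by
        apply ENNReal.ofReal_le_ofReal
        rw [Real.fourierInv_eq_fourier_neg]
        exact VectorFourier.norm_fourierIntegral_le_integral_norm _ _ _ _ _
    _ = ∫⁻ ξ, ‖f ξ‖₊ := ofReal_integral_norm_eq_lintegral_enorm hf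

private lemma aux_div_rpow {x t : ℝ} (hx : 0 ≤ x) (ht : 0 < t) (p : ℝ) :
    (x / t) ^ p = x ^ p * t ^ (-p) := by
  rw [Real.div_rpow hx ht.le, Real.rpow_neg ht.le, div_eq_mul_inv]

private lemma aux_CS {d : ℕ} {S : Set (EuclideanSpace ℝ (Fin d))} (hS : MeasurableSet S)
    (hS0 : ∀ ξ ∈ S, ξ ≠ 0) {f g : EuclideanSpace ℝ (Fin d) → ℂ}
    (hf0 : ∀ ξ ∉ S, f ξ = 0) {M : ℝ} (hM : 0 ≤ M)
    (hfg : ∀ ξ, ‖f ξ‖ ≤ M * ‖g ξ‖)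
    (hm : AEMeasurable (fun ξ => (‖f ξ‖₊ : ℝ≥0∞)) volume) (σ : ℝ) :
    ∫⁻ ξ, ‖f ξ‖₊ ≤
      (∫⁻ ξ in S, (‖ξ‖₊ : ℝ≥0∞) ^ (-(2*σ))) ^ (2⁻¹ : ℝ) *
        (ENNReal.ofReal M *
          (∫⁻ ξ, (‖ξ‖₊ : ℝ≥0∞) ^ (2*σ) * (‖g ξ‖₊ : ℝ≥0∞) ^ 2) ^ (2⁻¹ : ℝ)) := by
  set w : EuclideanSpace ℝ (Fin d) → ℝ≥0∞ := fun ξ => (‖ξ‖₊ : ℝ≥0∞) ^ (-σ) with hw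
  set F := S.indicator w with hF
  set G : EuclideanSpace ℝ (Fin d) → ℝ≥0∞ :=
    fun ξ => (‖ξ‖₊ : ℝ≥0∞) ^ σ * (‖f ξ‖₊ : ℝ≥0∞) with hG
  have hwmeas : Measurable w := (measurable_nnnorm.coe_nnreal_ennreal).pow_const _
  have hFmeas : Measurable F := hwmeas.indicator hS
  have hGmeas : AEMeasurable G volume :=
    ((measurable_nnnorm.coe_nnreal_ennreal).pow_const _).aemeasurable.mul hm
  have hFG : ∀ ξ, (‖f ξ‖₊ : ℝ≥0∞) = F ξ * G ξ := by
    intro ξ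
    by_cases h : ξ ∈ S
    · have hξ : (‖ξ‖₊ : ℝ≥0∞) ≠ 0 := by
        simpa using hS0 ξ h
      have hξ' : (‖ξ‖₊ : ℝ≥0∞) ≠ ⊤ := ENNReal.coe_ne_top
      simp only [hF, Set.indicator_of_mem h, hG, hw]
      rw [← mul_assoc, ← ENNReal.rpow_add _ _ hξ hξ', neg_add_cancel, ENNReal.rpow_zero, one_mul]
    · simp [hF, Set.indicator_of_notMem h, hG, hf0 ξ h]
  have holder := ENNReal.lintegral_mul_le_Lp_mul_Lq volume
    (Real.holderConjugate_iff.mpr ⟨one_lt_two, by norm_num⟩ : Real.HolderConjugate 2 2) hFmeas.aemeasurable hGmeas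
  have h1 : ∫⁻ ξ, F ξ ^ (2:ℝ) = ∫⁻ ξ in S, (‖ξ‖₊ : ℝ≥0∞) ^ (-(2*σ)) := by
    have : ∀ ξ, F ξ ^ (2:ℝ) = S.indicator (fun ξ => (‖ξ‖₊ : ℝ≥0∞) ^ (-(2*σ))) ξ := by
      intro ξ
      by_cases h : ξ ∈ S
      · simp only [hF, Set.indicator_of_mem h, hw]
        rw [← ENNReal.rpow_mul]
        ring_nf
      · simp [hF, Set.indicator_of_notMem h,
          ENNReal.zero_rpow_of_pos (by norm_num : (0:ℝ) < 2)]
    rw [lintegral_congr this, lintegral_indicator hS]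
  have h2 : ∫⁻ ξ, G ξ ^ (2:ℝ) ≤
      ENNReal.ofReal M ^ (2:ℝ) * ∫⁻ ξ, (‖ξ‖₊ : ℝ≥0∞) ^ (2*σ) * (‖g ξ‖₊ : ℝ≥0∞) ^ 2 := by
    rw [← lintegral_const_mul' _ _ (ENNReal.rpow_ne_top_of_nonneg (by norm_num) ENNReal.ofReal_ne_top)]
    refine lintegral_mono fun ξ => ?_
    have hb : (‖f ξ‖₊ : ℝ≥0∞) ≤ ENNReal.ofReal M * (‖g ξ‖₊ : ℝ≥0∞) := by
      rw [show (‖f ξ‖₊ : ℝ≥0∞) = ENNReal.ofReal ‖f ξ‖ from (ofReal_norm_eq_enorm _).symm,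
        show (‖g ξ‖₊ : ℝ≥0∞) = ENNReal.ofReal ‖g ξ‖ from (ofReal_norm_eq_enorm _).symm, ← ENNReal.ofReal_mul hM]
      exact ENNReal.ofReal_le_ofReal (hfg ξ)
    calc G ξ ^ (2:ℝ) = (‖ξ‖₊ : ℝ≥0∞) ^ (2*σ) * (‖f ξ‖₊ : ℝ≥0∞) ^ (2:ℝ) := by
          rw [hG, ENNReal.mul_rpow_of_nonneg _ _ (by norm_num : (0:ℝ) ≤ 2),
            ← ENNReal.rpow_mul]
          ring_nf
      _ ≤ (‖ξ‖₊ : ℝ≥0∞) ^ (2*σ) * (ENNReal.ofReal M * (‖g ξ‖₊ : ℝ≥0∞)) ^ (2:ℝ) := by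
          gcongr
      _ = ENNReal.ofReal M ^ (2:ℝ) * ((‖ξ‖₊ : ℝ≥0∞) ^ (2*σ) * (‖g ξ‖₊ : ℝ≥0∞) ^ 2) := by
          rw [ENNReal.mul_rpow_of_nonneg _ _ (by norm_num : (0:ℝ) ≤ 2),
            ENNReal.rpow_two ((‖g ξ‖₊ : ℝ≥0) : ℝ≥0∞)]
          ring
  calc ∫⁻ ξ, (‖f ξ‖₊ : ℝ≥0∞) = ∫⁻ ξ, (F * G) ξ := lintegral_congr fun ξ => hFG ξ
    _ ≤ (∫⁻ ξ, F ξ ^ (2:ℝ)) ^ (1/(2:ℝ)) * (∫⁻ ξ, G ξ ^ (2:ℝ)) ^ (1/(2:ℝ)) := holder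
    _ ≤ (∫⁻ ξ in S, (‖ξ‖₊ : ℝ≥0∞) ^ (-(2*σ))) ^ (2⁻¹:ℝ) *
        (ENNReal.ofReal M ^ (2:ℝ) *
          ∫⁻ ξ, (‖ξ‖₊ : ℝ≥0∞) ^ (2*σ) * (‖g ξ‖₊ : ℝ≥0∞) ^ 2) ^ (2⁻¹:ℝ) := by
          rw [one_div, h1]
          gcongr
    _ = (∫⁻ ξ in S, (‖ξ‖₊ : ℝ≥0∞) ^ (-(2*σ))) ^ (2⁻¹:ℝ) *
        (ENNReal.ofReal M *
          (∫⁻ ξ, (‖ξ‖₊ : ℝ≥0∞) ^ (2*σ) * (‖g ξ‖₊ : ℝ≥0∞) ^ 2) ^ (2⁻¹:ℝ)) := by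
          rw [ENNReal.mul_rpow_of_nonneg _ _ (by norm_num : (0:ℝ) ≤ 2⁻¹), ← ENNReal.rpow_mul]
          norm_num


/-- Scale localization in the subcritical setting: for `0 < s' < s < d/2` and a smooth
cutoff `χ` supported in `(0,∞)`, one has
`t^{(d-2s')/4} ‖χ(-tΔ)u‖_∞ ≤ C min(t^{-s'/2} ‖u‖_{L²}, t^{(s-s')/2} ‖u‖_{Ḣ^s})`
(stated on the Fourier side with `v = 𝓕u`); in particular for any bounded sequence in
`H^s`, the quantity `sup_n t^{(d-2s')/4} ‖χ(-tΔ)u_n‖_∞` tends to `0` as `t → 0⁺` and as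
`t → ∞`. -/
theorem subcritical_scale_localization (d : ℕ) (hd : 1 ≤ d) (s s' : ℝ)
    (hs'0 : 0 < s') (hs's : s' < s) (hsd : s < d / 2)
    (χ : ℝ → ℝ) (hχ : ContDiff ℝ (⊤ : ℕ∞) χ) (hχc : HasCompactSupport χ)
    (hχsupp : tsupport χ ⊆ Set.Ioi (0 : ℝ)) :
    ∃ C > (0 : ℝ),
      (∀ (v : EuclideanSpace ℝ (Fin d) → ℂ), ∀ t > (0 : ℝ),
        ENNReal.ofReal (t ^ (((d : ℝ) - 2 * s') / 4)) *
            eLpNorm (𝓕⁻ (fun ξ : EuclideanSpace ℝ (Fin d) =>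
              (χ (t * ‖ξ‖ ^ 2) : ℂ) * v ξ)) ⊤ volume ≤
          ENNReal.ofReal C *
            min
              (ENNReal.ofReal (t ^ (-(s' / 2))) *
                (∫⁻ ξ : EuclideanSpace ℝ (Fin d), (‖v ξ‖₊ : ℝ≥0∞) ^ 2) ^ (2⁻¹ : ℝ))
              (ENNReal.ofReal (t ^ ((s - s') / 2)) *
                (∫⁻ ξ : EuclideanSpace ℝ (Fin d),
                  (‖ξ‖₊ : ℝ≥0∞) ^ (2 * s) * (‖v ξ‖₊ : ℝ≥0∞) ^ 2) ^ (2⁻¹ : ℝ))) ∧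
      (∀ v : ℕ → EuclideanSpace ℝ (Fin d) → ℂ,
        (∃ B : ℝ≥0∞, B ≠ ⊤ ∧ ∀ n,
          (∫⁻ ξ : EuclideanSpace ℝ (Fin d), (‖v n ξ‖₊ : ℝ≥0∞) ^ 2) ^ (2⁻¹ : ℝ) +
            (∫⁻ ξ : EuclideanSpace ℝ (Fin d),
              (‖ξ‖₊ : ℝ≥0∞) ^ (2 * s) * (‖v n ξ‖₊ : ℝ≥0∞) ^ 2) ^ (2⁻¹ : ℝ) ≤ B) →
        Tendsto
            (fun t : ℝ => ⨆ n : ℕ,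
              t ^ (((d : ℝ) - 2 * s') / 4) *
                (eLpNorm (𝓕⁻ (fun ξ : EuclideanSpace ℝ (Fin d) =>
                  (χ (t * ‖ξ‖ ^ 2) : ℂ) * v n ξ)) ⊤ volume).toReal)
            (nhdsWithin 0 (Set.Ioi 0)) (nhds 0) ∧
          Tendsto
            (fun t : ℝ => ⨆ n : ℕ,
              t ^ (((d : ℝ) - 2 * s') / 4) *
                (eLpNorm (𝓕⁻ (fun ξ : EuclideanSpace ℝ (Fin d) =>
                  (χ (t * ‖ξ‖ ^ 2) : ℂ) * v n ξ)) ⊤ volume).toReal)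
            atTop (nhds 0)) := by
  classical
  obtain ⟨a, b, ha, hab, hK⟩ : ∃ a b : ℝ, 0 < a ∧ a ≤ b ∧ tsupport χ ⊆ Set.Icc a b := by
    rcases (tsupport χ).eq_empty_or_nonempty with h | h
    · exact ⟨1, 1, one_pos, le_refl _, by simp [h]⟩
    · exact ⟨sInf (tsupport χ), sSup (tsupport χ), hχsupp (IsCompact.sInf_mem hχc h),
        csInf_le_csSup h (IsCompact.bddBelow hχc) (IsCompact.bddAbove hχc),
        fun x hx => ⟨csInf_le (IsCompact.bddBelow hχc) hx,
          le_csSup (IsCompact.bddAbove hχc) hx⟩⟩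
  have hb : 0 < b := ha.trans_le hab
  obtain ⟨M0, hM0⟩ := hχc.exists_bound_of_continuous hχ.continuous
  set M := max M0 0 with hMdef
  have hM : 0 ≤ M := le_max_right _ _
  have hMb : ∀ x, ‖χ x‖ ≤ M := fun x => (hM0 x).trans (le_max_left _ _)
  have hVlt : volume (Metric.ball (0 : EuclideanSpace ℝ (Fin d)) 1) < ⊤ := measure_ball_lt_top
  set Vol := (volume (Metric.ball (0 : EuclideanSpace ℝ (Fin d)) 1)).toReal with hVoldef
  have hVol : 0 < Vol :=
    ENNReal.toReal_pos (Metric.measure_ball_pos volume (0 : EuclideanSpace ℝ (Fin d)) one_pos).ne' hVlt.ne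
  have hVeq : volume (Metric.ball (0 : EuclideanSpace ℝ (Fin d)) 1) = ENNReal.ofReal Vol :=
    (ENNReal.ofReal_toReal hVlt.ne).symm
  set α : ℝ := ((d:ℝ) - 2*s')/4 with hα
  set Cfun : ℝ → ℝ := fun σ => M * Vol ^ (2⁻¹:ℝ) * b ^ ((d:ℝ)/4) * a ^ (-(σ/2)) with hCfun
  have hCnn : ∀ σ : ℝ, 0 ≤ Cfun σ := fun σ =>
    mul_nonneg (mul_nonneg (mul_nonneg hM (Real.rpow_nonneg hVol.le _))
      (Real.rpow_nonneg hb.le _)) (Real.rpow_nonneg ha.le _)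
  have key : ∀ σ : ℝ, 0 ≤ σ → ∀ (v : EuclideanSpace ℝ (Fin d) → ℂ), ∀ t : ℝ, 0 < t →
      ENNReal.ofReal (t ^ α) *
          eLpNorm (𝓕⁻ (fun ξ : EuclideanSpace ℝ (Fin d) =>
            (χ (t * ‖ξ‖ ^ 2) : ℂ) * v ξ)) ⊤ volume ≤
        ENNReal.ofReal (Cfun σ) * (ENNReal.ofReal (t ^ (σ/2 - s'/2)) *
          (∫⁻ ξ : EuclideanSpace ℝ (Fin d),
            (‖ξ‖₊ : ℝ≥0∞) ^ (2*σ) * (‖v ξ‖₊ : ℝ≥0∞) ^ 2) ^ (2⁻¹ : ℝ)) := by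
    intro σ hσ v t ht
    set f : EuclideanSpace ℝ (Fin d) → ℂ := fun ξ => (χ (t * ‖ξ‖ ^ 2) : ℂ) * v ξ with hf
    by_cases hi : Integrable f volume
    swap
    · rw [aux_fourierInv_zero hi, eLpNorm_zero, mul_zero]
      exact zero_le
    set S := (fun ξ : EuclideanSpace ℝ (Fin d) => t * ‖ξ‖ ^ 2) ⁻¹' (tsupport χ) with hSdef
    have hcont : Continuous fun ξ : EuclideanSpace ℝ (Fin d) => t * ‖ξ‖ ^ 2 :=
      continuous_const.mul (continuous_norm.pow 2)
    have hSmeas : MeasurableSet S := ((isClosed_tsupport χ).preimage hcont).measurableSet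
    have hmem : ∀ ξ ∈ S, a ≤ t * ‖ξ‖ ^ 2 ∧ t * ‖ξ‖ ^ 2 ≤ b := fun ξ hξ => ⟨(hK hξ).1, (hK hξ).2⟩
    have hS0 : ∀ ξ ∈ S, ξ ≠ 0 := by
      intro ξ hξ h0
      have h1 := (hmem ξ hξ).1
      rw [h0] at h1
      simp only [norm_zero] at h1
      nlinarith
    have hf0 : ∀ ξ ∉ S, f ξ = 0 := fun ξ h => by
      simp [hf, image_eq_zero_of_notMem_tsupport h]
    have hfg : ∀ ξ, ‖f ξ‖ ≤ M * ‖v ξ‖ := by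
      intro ξ
      rw [hf]
      simp only [norm_mul, Complex.norm_real]
      exact mul_le_mul_of_nonneg_right (hMb _) (norm_nonneg _)
    have hCS := aux_CS hSmeas hS0 hf0 hM hfg hi.aestronglyMeasurable.enorm σ
    -- bound on the weighted measure of S
    have hwb : ∫⁻ ξ in S, (‖ξ‖₊ : ℝ≥0∞) ^ (-(2*σ)) ≤
        ENNReal.ofReal ((a/t) ^ (-σ)) * volume S := by
      calc ∫⁻ ξ in S, (‖ξ‖₊ : ℝ≥0∞) ^ (-(2*σ))
          ≤ ∫⁻ _ in S, ENNReal.ofReal ((a/t) ^ (-σ)) := by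
            refine lintegral_mono_ae ((ae_restrict_iff' hSmeas).2 (ae_of_all _ fun ξ hξ => ?_))
            have h1 : a / t ≤ ‖ξ‖ ^ 2 := (div_le_iff₀' ht).2 (hmem ξ hξ).1
            have h2 : (0:ℝ) < ‖ξ‖ ^ 2 := lt_of_lt_of_le (div_pos ha ht) h1
            have h3 : (0:ℝ) < ‖ξ‖ := norm_pos_iff.2 (hS0 ξ hξ)
            rw [show (‖ξ‖₊ : ℝ≥0∞) = ENNReal.ofReal ‖ξ‖ from (ofReal_norm_eq_enorm _).symm,
              ENNReal.ofReal_rpow_of_pos h3]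
            apply ENNReal.ofReal_le_ofReal
            have h4 : ‖ξ‖ ^ (-(2*σ)) = (‖ξ‖ ^ 2 : ℝ) ^ (-σ) := by
              rw [← Real.rpow_natCast ‖ξ‖ 2, ← Real.rpow_mul (norm_nonneg _)]
              norm_num
            rw [h4]
            exact Real.rpow_le_rpow_of_nonpos (div_pos ha ht) h1 (by linarith)
        _ = ENNReal.ofReal ((a/t) ^ (-σ)) * volume S := setLIntegral_const _ _
    have hSb : volume S ≤
        ENNReal.ofReal ((b/t) ^ ((d:ℝ)/2)) * ENNReal.ofReal Vol := by
      have hsub : S ⊆ Metric.closedBall 0 (Real.sqrt (b/t)) := by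
        intro ξ hξ
        have h2 : ‖ξ‖ ^ 2 ≤ b / t := (le_div_iff₀' ht).2 (hmem ξ hξ).2
        rw [Metric.mem_closedBall, dist_zero_right]
        calc ‖ξ‖ = Real.sqrt (‖ξ‖ ^ 2) := (Real.sqrt_sq (norm_nonneg ξ)).symm
          _ ≤ Real.sqrt (b/t) := Real.sqrt_le_sqrt h2
      calc volume S ≤ volume (Metric.closedBall (0 : EuclideanSpace ℝ (Fin d)) (Real.sqrt (b/t))) :=
            measure_mono hsub
        _ = ENNReal.ofReal (Real.sqrt (b/t) ^ Module.finrank ℝ (EuclideanSpace ℝ (Fin d))) *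
            volume (Metric.ball (0 : EuclideanSpace ℝ (Fin d)) 1) :=
            Measure.addHaar_closedBall _ _ (Real.sqrt_nonneg _)
        _ = ENNReal.ofReal ((b/t) ^ ((d:ℝ)/2)) * ENNReal.ofReal Vol := by
            rw [hVeq]
            congr 2
            rw [finrank_euclideanSpace_fin, Real.sqrt_eq_rpow,
              ← Real.rpow_natCast ((b/t) ^ ((1:ℝ)/2)) d,
              ← Real.rpow_mul (div_nonneg hb.le ht.le)]
            congr 1
            ring
    set N := (∫⁻ ξ : EuclideanSpace ℝ (Fin d),
      (‖ξ‖₊ : ℝ≥0∞) ^ (2*σ) * (‖v ξ‖₊ : ℝ≥0∞) ^ 2) ^ (2⁻¹ : ℝ) with hN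
    have hW : (∫⁻ ξ in S, (‖ξ‖₊ : ℝ≥0∞) ^ (-(2*σ))) ≤
        ENNReal.ofReal ((a/t) ^ (-σ)) *
          (ENNReal.ofReal ((b/t) ^ ((d:ℝ)/2)) * ENNReal.ofReal Vol) := by
      exact hwb.trans (mul_le_mul_right hSb _)
    have hW2 : (∫⁻ ξ in S, (‖ξ‖₊ : ℝ≥0∞) ^ (-(2*σ))) ^ (2⁻¹:ℝ) ≤
        ENNReal.ofReal ((a/t) ^ (-(σ/2))) *
          (ENNReal.ofReal ((b/t) ^ ((d:ℝ)/4)) * ENNReal.ofReal (Vol ^ (2⁻¹:ℝ))) := by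
      have h5 := ENNReal.rpow_le_rpow hW (by norm_num : (0:ℝ) ≤ 2⁻¹)
      refine h5.trans_eq ?_
      rw [ENNReal.mul_rpow_of_nonneg _ _ (by norm_num : (0:ℝ) ≤ 2⁻¹),
        ENNReal.mul_rpow_of_nonneg _ _ (by norm_num : (0:ℝ) ≤ 2⁻¹),
        ENNReal.ofReal_rpow_of_pos (Real.rpow_pos_of_pos (div_pos ha ht) _),
        ENNReal.ofReal_rpow_of_pos (Real.rpow_pos_of_pos (div_pos hb ht) _),
        ENNReal.ofReal_rpow_of_pos hVol,
        ← Real.rpow_mul (div_nonneg ha.le ht.le),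
        ← Real.rpow_mul (div_nonneg hb.le ht.le)]
      have e1 : -σ * 2⁻¹ = -(σ/2) := by ring
      have e2 : (d:ℝ)/2 * 2⁻¹ = (d:ℝ)/4 := by ring
      rw [e1, e2]
    calc ENNReal.ofReal (t ^ α) * eLpNorm (𝓕⁻ f) ⊤ volume
        ≤ ENNReal.ofReal (t ^ α) *
            ((∫⁻ ξ in S, (‖ξ‖₊ : ℝ≥0∞) ^ (-(2*σ))) ^ (2⁻¹:ℝ) *
              (ENNReal.ofReal M * N)) :=
          mul_le_mul_right ((aux_eLpNorm_le hi).trans hCS) _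
      _ ≤ ENNReal.ofReal (t ^ α) *
            ((ENNReal.ofReal ((a/t) ^ (-(σ/2))) *
              (ENNReal.ofReal ((b/t) ^ ((d:ℝ)/4)) * ENNReal.ofReal (Vol ^ (2⁻¹:ℝ)))) *
              (ENNReal.ofReal M * N)) := by
          exact mul_le_mul_right (mul_le_mul_left hW2 _) _
      _ = ENNReal.ofReal (Cfun σ) * (ENNReal.ofReal (t ^ (σ/2 - s'/2)) * N) := by
          rw [aux_div_rpow ha.le ht, aux_div_rpow hb.le ht, neg_neg]
          have ht3 : t ^ (σ/2 - s'/2) = t ^ α * (t ^ (σ/2) * t ^ (-((d:ℝ)/4))) := by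
            rw [← Real.rpow_add ht, ← Real.rpow_add ht, hα]
            congr 1
            ring
          have hCe : Cfun σ = M * Vol ^ (2⁻¹:ℝ) * b ^ ((d:ℝ)/4) * a ^ (-(σ/2)) := by
            rw [hCfun]
          rw [ht3, hCe,
            ENNReal.ofReal_mul (Real.rpow_nonneg ha.le _),
            ENNReal.ofReal_mul (Real.rpow_nonneg hb.le _),
            ENNReal.ofReal_mul (mul_nonneg (mul_nonneg hM (Real.rpow_nonneg hVol.le _))
              (Real.rpow_nonneg hb.le _)),
            ENNReal.ofReal_mul (mul_nonneg hM (Real.rpow_nonneg hVol.le _)),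
            ENNReal.ofReal_mul hM,
            ENNReal.ofReal_mul (Real.rpow_nonneg ht.le _),
            ENNReal.ofReal_mul (Real.rpow_nonneg ht.le _)]
          ring
  have e0 : ∀ u : EuclideanSpace ℝ (Fin d) → ℂ,
      (∫⁻ ξ : EuclideanSpace ℝ (Fin d), (‖ξ‖₊ : ℝ≥0∞) ^ (2*(0:ℝ)) * (‖u ξ‖₊ : ℝ≥0∞) ^ 2)
        = ∫⁻ ξ : EuclideanSpace ℝ (Fin d), (‖u ξ‖₊ : ℝ≥0∞) ^ 2 := fun u =>
    lintegral_congr fun ξ => by rw [mul_zero, ENNReal.rpow_zero, one_mul]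
  set C : ℝ := max (Cfun 0) (Cfun s) + 1 with hCdef
  have hC0 : 0 < C := by
    have h0 := hCnn 0
    have h1 := le_max_left (Cfun 0) (Cfun s)
    rw [hCdef]
    linarith
  have hC0' : Cfun 0 ≤ C := by
    have := le_max_left (Cfun 0) (Cfun s); rw [hCdef]; linarith
  have hCs' : Cfun s ≤ C := by
    have := le_max_right (Cfun 0) (Cfun s); rw [hCdef]; linarith
  have hs0 : (0:ℝ) ≤ s := by linarith
  refine ⟨C, hC0, ?_, ?_⟩
  · -- part 1
    intro v t ht
    have k0 := key 0 le_rfl v t ht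
    rw [e0 v, show (0:ℝ)/2 - s'/2 = -(s'/2) from by ring] at k0
    have ks := key s hs0 v t ht
    rw [show s/2 - s'/2 = (s - s')/2 from by ring] at ks
    rcases le_total
        (ENNReal.ofReal (t ^ (-(s' / 2))) *
          (∫⁻ ξ : EuclideanSpace ℝ (Fin d), (‖v ξ‖₊ : ℝ≥0∞) ^ 2) ^ (2⁻¹ : ℝ))
        (ENNReal.ofReal (t ^ ((s - s') / 2)) *
          (∫⁻ ξ : EuclideanSpace ℝ (Fin d),
            (‖ξ‖₊ : ℝ≥0∞) ^ (2 * s) * (‖v ξ‖₊ : ℝ≥0∞) ^ 2) ^ (2⁻¹ : ℝ)) with h | h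
    · rw [min_eq_left h]
      exact k0.trans (mul_le_mul_left (ENNReal.ofReal_le_ofReal hC0') _)
    · rw [min_eq_right h]
      exact ks.trans (mul_le_mul_left (ENNReal.ofReal_le_ofReal hCs') _)
  · -- part 2
    rintro v ⟨B, hBtop, hB⟩
    have hbd : ∀ σ : ℝ, 0 ≤ σ → ∀ (n : ℕ) (t : ℝ), 0 < t →
        (∫⁻ ξ : EuclideanSpace ℝ (Fin d),
            (‖ξ‖₊ : ℝ≥0∞) ^ (2*σ) * (‖v n ξ‖₊ : ℝ≥0∞) ^ 2) ^ (2⁻¹ : ℝ) ≤ B →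
        t ^ α * (eLpNorm (𝓕⁻ (fun ξ : EuclideanSpace ℝ (Fin d) =>
            (χ (t * ‖ξ‖ ^ 2) : ℂ) * v n ξ)) ⊤ volume).toReal ≤
          Cfun σ * (t ^ (σ/2 - s'/2) * B.toReal) := by
      intro σ hσ n t ht hNB
      have k2 := (key σ hσ (v n) t ht).trans
        (mul_le_mul_right (mul_le_mul_right hNB _) _)
      have hRne : ENNReal.ofReal (Cfun σ) * (ENNReal.ofReal (t ^ (σ/2 - s'/2)) * B) ≠ ⊤ :=
        ENNReal.mul_ne_top ENNReal.ofReal_ne_top (ENNReal.mul_ne_top ENNReal.ofReal_ne_top hBtop)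
      have h3 := ENNReal.toReal_mono hRne k2
      rw [ENNReal.toReal_mul, ENNReal.toReal_mul, ENNReal.toReal_mul,
        ENNReal.toReal_ofReal (Real.rpow_nonneg ht.le _),
        ENNReal.toReal_ofReal (hCnn σ),
        ENNReal.toReal_ofReal (Real.rpow_nonneg ht.le _)] at h3
      exact h3
    have hB2 : ∀ n, (∫⁻ ξ : EuclideanSpace ℝ (Fin d),
        (‖ξ‖₊ : ℝ≥0∞) ^ (2*(0:ℝ)) * (‖v n ξ‖₊ : ℝ≥0∞) ^ 2) ^ (2⁻¹ : ℝ) ≤ B := fun n => by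
      rw [e0 (v n)]
      exact le_trans le_self_add (hB n)
    have hBs : ∀ n, (∫⁻ ξ : EuclideanSpace ℝ (Fin d),
        (‖ξ‖₊ : ℝ≥0∞) ^ (2*s) * (‖v n ξ‖₊ : ℝ≥0∞) ^ 2) ^ (2⁻¹ : ℝ) ≤ B := fun n =>
      le_trans le_add_self (hB n)
    have hFnn : ∀ t : ℝ, 0 < t →
        (0:ℝ) ≤ ⨆ n : ℕ, t ^ α * (eLpNorm (𝓕⁻ (fun ξ : EuclideanSpace ℝ (Fin d) =>
          (χ (t * ‖ξ‖ ^ 2) : ℂ) * v n ξ)) ⊤ volume).toReal := fun t ht =>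
      Real.iSup_nonneg fun n => mul_nonneg (Real.rpow_nonneg ht.le _) ENNReal.toReal_nonneg
    have hF0 : ∀ t : ℝ, 0 < t →
        (⨆ n : ℕ, t ^ α * (eLpNorm (𝓕⁻ (fun ξ : EuclideanSpace ℝ (Fin d) =>
            (χ (t * ‖ξ‖ ^ 2) : ℂ) * v n ξ)) ⊤ volume).toReal) ≤
          Cfun 0 * (t ^ ((0:ℝ)/2 - s'/2) * B.toReal) := fun t ht =>
      ciSup_le fun n => hbd 0 le_rfl n t ht (hB2 n)
    have hFs : ∀ t : ℝ, 0 < t →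
        (⨆ n : ℕ, t ^ α * (eLpNorm (𝓕⁻ (fun ξ : EuclideanSpace ℝ (Fin d) =>
            (χ (t * ‖ξ‖ ^ 2) : ℂ) * v n ξ)) ⊤ volume).toReal) ≤
          Cfun s * (t ^ (s/2 - s'/2) * B.toReal) := fun t ht =>
      ciSup_le fun n => hbd s hs0 n t ht (hBs n)
    constructor
    · -- t → 0⁺
      have hp : (0:ℝ) < s/2 - s'/2 := by linarith
      have htend0 : Tendsto (fun t : ℝ => t ^ (s/2 - s'/2))
          (nhdsWithin 0 (Set.Ioi 0)) (nhds 0) := by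
        have h1 := (Real.continuousAt_rpow_const 0 (s/2 - s'/2) (Or.inr hp.le)).tendsto
        rw [Real.zero_rpow hp.ne'] at h1
        exact h1.mono_left nhdsWithin_le_nhds
      have htend : Tendsto (fun t : ℝ => Cfun s * (t ^ (s/2 - s'/2) * B.toReal))
          (nhdsWithin 0 (Set.Ioi 0)) (nhds 0) := by
        have h2 := (htend0.mul_const B.toReal).const_mul (Cfun s)
        simpa using h2
      refine squeeze_zero' (eventually_mem_nhdsWithin.mono fun t ht => hFnn t ht)
        (eventually_mem_nhdsWithin.mono fun t ht => hFs t ht) htend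
    · -- t → ∞
      have hp : (0:ℝ) < s'/2 := by linarith
      have htend0 : Tendsto (fun t : ℝ => t ^ ((0:ℝ)/2 - s'/2)) atTop (nhds 0) := by
        have h1 := tendsto_rpow_neg_atTop hp
        have e : -(s'/2) = (0:ℝ)/2 - s'/2 := by ring
        rw [e] at h1
        exact h1
      have htend : Tendsto (fun t : ℝ => Cfun 0 * (t ^ ((0:ℝ)/2 - s'/2) * B.toReal))
          atTop (nhds 0) := by
        have h2 := (htend0.mul_const B.toReal).const_mul (Cfun 0)
        simpa using h2
      refine squeeze_zero' ((eventually_gt_atTop 0).mono fun t ht => hFnn t ht)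
        ((eventually_gt_atTop 0).mono fun t ht => hF0 t ht) htend
end
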